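/- arXiv:2503.14086 — 6 statements merged into one kernel-verified Lean document; each statement's English description precedes it below -/
import Mathlib

section
/- Let 𝒴 ⊆ L^0(Ω,𝐅_T,P) be any set of allowed exchanges with 0 ∈ 𝒴. If ℳ_e(𝒴) ≠ ∅, then NCA(𝒴) holds. -/
/-!
Fix `Q ∈ ℳₑ(𝒴)` and an agent `i` with gain `k = (H · X)_T` such that `k + yⁱ ≥ 0`. The gain is
bounded below by the `Qⁱ`-integrable `-yⁱ`, and in discrete time this alone makes `(H · X)` a true
`Qⁱ`-martingale, with no integrability of `H`: backwards in time `(H · X)_t ≥ -E[yⁱ | ℱ_t]`, and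
then forwards `E[(H · X)_{t+1}] = E[(H · X)_t]`, both by truncating on the `ℱ_t`-measurable sets
where `(H · X)_t` and `H_{t+1}` are bounded. Hence `E_{Qⁱ}[k + yⁱ] = E_{Qⁱ}[yⁱ]`, and summing over
the agents, `Σᵢ E_{Qⁱ}[kⁱ + yⁱ] ≤ 0` with nonnegative integrands, so every `kⁱ + yⁱ` vanishes
`Qⁱ`-a.s., hence `P`-a.s.
-/

open MeasureTheory Filter Topology

namespace CollectiveArb

variable {Ω : Type*}

/-- Terminal gains `K_i` of admissible (predictable) strategies for an agent with
filtration `F`, trading the assets indexed by `A`, over times `1,…,T`. -/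
def gainsSet {J : ℕ} (F : ℕ → MeasurableSpace Ω) (T : ℕ)
    (A : Finset (Fin J)) (X : Fin J → ℕ → Ω → ℝ) : Set (Ω → ℝ) :=
  { g | ∃ H : Fin J → ℕ → Ω → ℝ,
      (∀ j ∈ A, ∀ s, 1 ≤ s → s ≤ T → Measurable[F (s - 1)] (H j s)) ∧
      g = fun ω => ∑ j ∈ A, ∑ s ∈ Finset.Icc 1 T, H j s ω * (X j s ω - X j (s - 1) ω) }

/-- No collective arbitrage for the gains sets `K` and the exchange set `Y`:
`(K₁ × ⋯ × K_N + Y) ∩ L⁰₊ = {0}`. -/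
def NCA {N : ℕ} [MeasurableSpace Ω] (P : Measure Ω)
    (K : Fin N → Set (Ω → ℝ)) (Y : Set (Fin N → Ω → ℝ)) : Prop :=
  ∀ k : Fin N → Ω → ℝ, ∀ y ∈ Y, (∀ i, k i ∈ K i) →
    (∀ i, ∀ᵐ ω ∂P, 0 ≤ k i ω + y i ω) →
    ∀ i, (fun ω => k i ω + y i ω) =ᵐ[P] fun _ => (0 : ℝ)

/-- `K^𝒴 = ⨉ᵢ (Kᵢ − L⁰₊(ℱᵢ_T)) + 𝒴`. -/
def KY {N : ℕ} [MeasurableSpace Ω] (P : Measure Ω)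
    (FT : Fin N → MeasurableSpace Ω)
    (K : Fin N → Set (Ω → ℝ)) (Y : Set (Fin N → Ω → ℝ)) : Set (Fin N → Ω → ℝ) :=
  { f | ∃ (k l y : Fin N → Ω → ℝ), y ∈ Y ∧ (∀ i, k i ∈ K i) ∧
      (∀ i, Measurable[FT i] (l i) ∧ (∀ᵐ ω ∂P, 0 ≤ l i ω)) ∧
      ∀ i, f i = fun ω => k i ω - l i ω + y i ω }

/-- `ℝ^N_0`: zero-sum deterministic exchanges, viewed as constant random vectors. -/
def zeroSum (Ω : Type*) (N : ℕ) : Set (Fin N → Ω → ℝ) :=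
  { y | ∃ x : Fin N → ℝ, (∑ i, x i) = 0 ∧ ∀ i, y i = fun _ => x i }

/-- `span(ℝ^N_0, Y_1, …, Y_R)`: the finite-dimensional space of exchanges generated
by `ℝ^N_0` and the random vectors `Ys 1, …, Ys R`. -/
def spanExch {N R : ℕ} (Ys : Fin R → Fin N → Ω → ℝ) : Set (Fin N → Ω → ℝ) :=
  { y | ∃ (x : Fin N → ℝ) (c : Fin R → ℝ), (∑ i, x i) = 0 ∧
      ∀ i, y i = fun ω => x i + ∑ r, c r * Ys r i ω }

/-- `span(𝒴₀ ∪ {g})` for a vector subspace `𝒴₀`. -/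
def spanWith {N : ℕ} (Y0 : Set (Fin N → Ω → ℝ)) (g : Fin N → Ω → ℝ) :
    Set (Fin N → Ω → ℝ) :=
  { y | ∃ w ∈ Y0, ∃ c : ℝ, ∀ i, y i = fun ω => w i ω + c * g i ω }

/-- Equivalent martingale measures `Mᵢₑ` for the assets in `A`, w.r.t. the filtration `F`. -/
def martMeasures {J : ℕ} [MeasurableSpace Ω] (P : Measure Ω)
    (F : ℕ → MeasurableSpace Ω) (T : ℕ) (A : Finset (Fin J))
    (X : Fin J → ℕ → Ω → ℝ) : Set (Measure Ω) :=
  { Q | IsProbabilityMeasure Q ∧ Q ≪ P ∧ P ≪ Q ∧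
      ∀ j ∈ A, (∀ t, t ≤ T → Integrable (X j t) Q) ∧
        ∀ s t, s ≤ t → t ≤ T → X j s =ᵐ[Q] Q[X j t | F s] }

/-- Equivalent collective martingale measures `ℳₑ(𝒴)`. -/
def MeY {J N : ℕ} [MeasurableSpace Ω] (P : Measure Ω)
    (F : Fin N → ℕ → MeasurableSpace Ω) (T : ℕ) (assets : Fin N → Finset (Fin J))
    (X : Fin J → ℕ → Ω → ℝ) (Y : Set (Fin N → Ω → ℝ)) : Set (Fin N → Measure Ω) :=
  { Q | (∀ i, Q i ∈ martMeasures P (F i) T (assets i) X) ∧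
      (∀ y ∈ Y, ∀ i, Integrable (y i) (Q i)) ∧
      ∀ y ∈ Y, (∑ i, ∫ ω, y i ω ∂(Q i)) ≤ 0 }

/-- `ℳ^φ_e(𝒴) = {Q ∈ ℳₑ(𝒴) : E_{Qⁱ}[|φⁱ|] < ∞ ∀ i}`. -/
def MeYphi {J N : ℕ} [MeasurableSpace Ω] (P : Measure Ω)
    (F : Fin N → ℕ → MeasurableSpace Ω) (T : ℕ) (assets : Fin N → Finset (Fin J))
    (X : Fin J → ℕ → Ω → ℝ) (Y : Set (Fin N → Ω → ℝ))
    (φ : Fin N → Ω → ℝ) : Set (Fin N → Measure Ω) :=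
  { Q | Q ∈ MeY P F T assets X Y ∧ ∀ i, Integrable (φ i) (Q i) }

/-- Closedness of a set of random vectors under componentwise `P`-a.s. convergence
of sequences (within `L⁰(Ω, 𝐅_T, P)`). -/
def ClosedAS {N : ℕ} [MeasurableSpace Ω] (P : Measure Ω)
    (FT : Fin N → MeasurableSpace Ω) (S : Set (Fin N → Ω → ℝ)) : Prop :=
  ∀ (f : ℕ → Fin N → Ω → ℝ) (g : Fin N → Ω → ℝ),
    (∀ n, f n ∈ S) → (∀ i, Measurable[FT i] (g i)) →
    (∀ i, ∀ᵐ ω ∂P, Tendsto (fun n => f n i ω) atTop (𝓝 (g i ω))) →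
    g ∈ S

/-- Collective superhedging price `ρ^𝒴₊(f)` (with `inf ∅ = +∞`). -/
noncomputable def rhoPlus {N : ℕ} [MeasurableSpace Ω] (P : Measure Ω)
    (K : Fin N → Set (Ω → ℝ)) (Y : Set (Fin N → Ω → ℝ))
    (f : Fin N → Ω → ℝ) : EReal :=
  sInf { z : EReal | ∃ m : Fin N → ℝ, z = ((∑ i, m i : ℝ) : EReal) ∧
      ∃ k : Fin N → Ω → ℝ, (∀ i, k i ∈ K i) ∧ ∃ y ∈ Y,
        ∀ i, ∀ᵐ ω ∂P, f i ω ≤ m i + k i ω + y i ω }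

/-- Collective subhedging price `ρ^𝒴₋(f)` (with `sup ∅ = −∞`). -/
noncomputable def rhoMinus {N : ℕ} [MeasurableSpace Ω] (P : Measure Ω)
    (K : Fin N → Set (Ω → ℝ)) (Y : Set (Fin N → Ω → ℝ))
    (f : Fin N → Ω → ℝ) : EReal :=
  sSup { z : EReal | ∃ m : Fin N → ℝ, z = ((∑ i, m i : ℝ) : EReal) ∧
      ∃ k : Fin N → Ω → ℝ, (∀ i, k i ∈ K i) ∧ ∃ y ∈ Y,
        ∀ i, ∀ᵐ ω ∂P, m i + k i ω - y i ω ≤ f i ω }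

/-- `ρ^𝒴₊(f)` is attained. -/
def rhoPlusAttained {N : ℕ} [MeasurableSpace Ω] (P : Measure Ω)
    (K : Fin N → Set (Ω → ℝ)) (Y : Set (Fin N → Ω → ℝ))
    (f : Fin N → Ω → ℝ) : Prop :=
  ∃ (m : Fin N → ℝ) (k y : Fin N → Ω → ℝ), y ∈ Y ∧ (∀ i, k i ∈ K i) ∧
    (∀ i, ∀ᵐ ω ∂P, f i ω ≤ m i + k i ω + y i ω) ∧
    rhoPlus P K Y f = ((∑ i, m i : ℝ) : EReal)

/-- `ρ^𝒴₋(f)` is attained. -/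
def rhoMinusAttained {N : ℕ} [MeasurableSpace Ω] (P : Measure Ω)
    (K : Fin N → Set (Ω → ℝ)) (Y : Set (Fin N → Ω → ℝ))
    (f : Fin N → Ω → ℝ) : Prop :=
  ∃ (m : Fin N → ℝ) (k y : Fin N → Ω → ℝ), y ∈ Y ∧ (∀ i, k i ∈ K i) ∧
    (∀ i, ∀ᵐ ω ∂P, m i + k i ω - y i ω ≤ f i ω) ∧
    rhoMinus P K Y f = ((∑ i, m i : ℝ) : EReal)

/-- `f` is `𝒴`-collectively replicable: `f ∈ ℝ^N + (K₁ × ⋯ × K_N) + 𝒴` in `L⁰`. -/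
def Replicable {N : ℕ} [MeasurableSpace Ω] (P : Measure Ω)
    (K : Fin N → Set (Ω → ℝ)) (Y : Set (Fin N → Ω → ℝ))
    (f : Fin N → Ω → ℝ) : Prop :=
  ∃ (m : Fin N → ℝ) (k y : Fin N → Ω → ℝ), y ∈ Y ∧ (∀ i, k i ∈ K i) ∧
    ∀ i, f i =ᵐ[P] fun ω => m i + k i ω + y i ω

section OneStep

variable {ι : Type*} {m m0 : MeasurableSpace Ω} {μ : Measure Ω} [IsFiniteMeasure μ]
  {A : Finset ι} {Z R : Ω → ℝ} {h D : ι → Ω → ℝ}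

theorem condExp_sub_ae_eq_zero (hm : m ≤ m0) {f g : Ω → ℝ} (hf : Measurable[m] f)
    (hfi : Integrable f μ) (hgi : Integrable g μ) (hfg : f =ᵐ[μ] μ[g|m]) :
    μ[g - f|m] =ᵐ[μ] 0 := by
  filter_upwards [condExp_sub hgi hfi m, hfg] with ω hsub hω
  simp [hsub, condExp_of_stronglyMeasurable hm hf.stronglyMeasurable hfi, ← hω]

theorem condExp_mul_ae_eq_zero_of_bdd (hm : m ≤ m0) {g d : Ω → ℝ} (hg : Measurable[m] g)
    {c : ℝ} (hgc : ∀ ω, |g ω| ≤ c) (hd : Integrable d μ) (hdm : μ[d|m] =ᵐ[μ] 0) :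
    μ[g * d|m] =ᵐ[μ] 0 := by
  filter_upwards [condExp_stronglyMeasurable_mul_of_bound hm hg.stronglyMeasurable hd c
    (ae_of_all _ hgc), hdm] with ω hmul hω
  simp [hmul, hω]

def truncSet (Z : Ω → ℝ) (A : Finset ι) (h : ι → Ω → ℝ) (n : ℕ) : Set Ω :=
  {ω | |Z ω| ≤ n} ∩ ⋂ j ∈ A, {ω | |h j ω| ≤ n}

theorem measurableSet_truncSet (hZ : Measurable[m] Z) (hh : ∀ j ∈ A, Measurable[m] (h j))
    (n : ℕ) : MeasurableSet[m] (truncSet Z A h n) :=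
  (measurableSet_le hZ.abs measurable_const).inter <|
    .biInter A.countable_toSet fun j hj => measurableSet_le (hh j hj).abs measurable_const

theorem eventually_mem_truncSet (Z : Ω → ℝ) (A : Finset ι) (h : ι → Ω → ℝ) (ω : Ω) :
    ∀ᶠ n in atTop, ω ∈ truncSet Z A h n := by
  simp only [truncSet, Set.mem_inter_iff, Set.mem_iInter₂]
  exact (tendsto_natCast_atTop_atTop (R := ℝ) |>.eventually_ge_atTop _).and <|
    (eventually_all_finset A).2 fun _ _ =>
      tendsto_natCast_atTop_atTop (R := ℝ) |>.eventually_ge_atTop _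

theorem condExp_indicator_truncSet (hm : m ≤ m0) (hZ : Measurable[m] Z)
    (hh : ∀ j ∈ A, Measurable[m] (h j)) (hD : ∀ j ∈ A, Integrable (D j) μ)
    (hDm : ∀ j ∈ A, μ[D j|m] =ᵐ[μ] 0) (hR : Integrable R μ) (n : ℕ) :
    Integrable ((truncSet Z A h n).indicator (Z + ∑ j ∈ A, h j * D j + R)) μ ∧
      μ[(truncSet Z A h n).indicator (Z + ∑ j ∈ A, h j * D j + R)|m]
        =ᵐ[μ] (truncSet Z A h n).indicator (Z + μ[R|m]) := by
  set B := truncSet Z A h n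
  have hB : MeasurableSet[m] B := measurableSet_truncSet hZ hh n
  have hbdd (f : Ω → ℝ) (hf : ∀ ω ∈ B, |f ω| ≤ n) (ω : Ω) : |B.indicator f ω| ≤ n := by
    by_cases hω : ω ∈ B <;> simp [hω, hf]
  have hZm : Measurable[m] (B.indicator Z) := hZ.indicator hB
  have hZi : Integrable (B.indicator Z) μ :=
    (integrable_const (n : ℝ)).mono' (hZm.mono hm le_rfl).aestronglyMeasurable
      (ae_of_all _ (hbdd Z fun ω hω => hω.1))
  have hξ (j : ι) (hj : j ∈ A) :
      Integrable (B.indicator (h j) * D j) μ ∧ μ[B.indicator (h j) * D j|m] =ᵐ[μ] 0 := by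
    have hhj : ∀ ω, |B.indicator (h j) ω| ≤ n :=
      hbdd (h j) fun ω hω => Set.mem_iInter₂.1 hω.2 j hj
    have hhm : Measurable[m] (B.indicator (h j)) := (hh j hj).indicator hB
    exact ⟨(hD j hj).bdd_mul (hhm.mono hm le_rfl).aestronglyMeasurable (ae_of_all _ hhj),
      condExp_mul_ae_eq_zero_of_bdd hm hhm hhj (hD j hj) (hDm j hj)⟩
  have hξi : Integrable (∑ j ∈ A, B.indicator (h j) * D j) μ :=
    integrable_finsetSum' _ fun j hj => (hξ j hj).1
  have hRi : Integrable (B.indicator R) μ := hR.indicator (hm _ hB)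
  have hsplit : B.indicator (Z + ∑ j ∈ A, h j * D j + R)
      = B.indicator Z + ∑ j ∈ A, B.indicator (h j) * D j + B.indicator R := by
    ext ω
    by_cases hω : ω ∈ B <;> simp [hω]
  rw [hsplit]
  refine ⟨(hZi.add hξi).add hRi, ?_⟩
  filter_upwards [condExp_add (hZi.add hξi) hRi m, condExp_add hZi hξi m,
    condExp_finsetSum (fun j hj => (hξ j hj).1) m,
    (eventually_all_finset A).2 fun j hj => (hξ j hj).2, condExp_indicator hR hB]
    with ω hadd₁ hadd₂ hsum hzero hind
  simp [hadd₁, hadd₂, hsum, hind, Finset.sum_eq_zero hzero,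
    condExp_of_stronglyMeasurable hm hZm.stronglyMeasurable hZi, Set.indicator_add']

theorem neg_condExp_le_of_le_add_sum_mul (hm : m ≤ m0) (hZ : Measurable[m] Z)
    (hh : ∀ j ∈ A, Measurable[m] (h j)) (hD : ∀ j ∈ A, Integrable (D j) μ)
    (hDm : ∀ j ∈ A, μ[D j|m] =ᵐ[μ] 0) (hR : Integrable R μ)
    (hle : -R ≤ᵐ[μ] Z + ∑ j ∈ A, h j * D j) :
    -μ[R|m] ≤ᵐ[μ] Z := by
  have hnonneg (n : ℕ) : 0 ≤ᵐ[μ] (truncSet Z A h n).indicator (Z + μ[R|m]) := by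
    refine (condExp_nonneg ?_).trans_eq (condExp_indicator_truncSet hm hZ hh hD hDm hR n).2
    filter_upwards [hle] with ω hω
    refine Set.indicator_apply_nonneg fun _ => ?_
    simp only [Pi.neg_apply, Pi.add_apply] at hω ⊢
    linarith
  filter_upwards [ae_all_iff.2 hnonneg] with ω hω
  obtain ⟨n, hn⟩ := (eventually_mem_truncSet Z A h ω).exists
  have := hω n
  simp only [Pi.zero_apply, Set.indicator_of_mem hn, Pi.add_apply] at this
  simp only [Pi.neg_apply]
  linarith

theorem integral_add_sum_mul_eq (hm : m ≤ m0) (hZ : Measurable[m] Z) (hZi : Integrable Z μ)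
    (hh : ∀ j ∈ A, Measurable[m] (h j)) (hD : ∀ j ∈ A, Integrable (D j) μ)
    (hDm : ∀ j ∈ A, μ[D j|m] =ᵐ[μ] 0) (hR : Integrable R μ)
    (hle : -R ≤ᵐ[μ] Z + ∑ j ∈ A, h j * D j) :
    Integrable (Z + ∑ j ∈ A, h j * D j) μ ∧ ∫ ω, (Z + ∑ j ∈ A, h j * D j) ω ∂μ = ∫ ω, Z ω ∂μ := by
  set f := Z + ∑ j ∈ A, h j * D j + R
  have hcover : AECover μ atTop (truncSet Z A h) :=
    ⟨ae_of_all _ (eventually_mem_truncSet Z A h), fun n => hm _ (measurableSet_truncSet hZ hh n)⟩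
  have key := condExp_indicator_truncSet hm hZ hh hD hDm hR
  have hfi (n : ℕ) : IntegrableOn f (truncSet Z A h n) μ :=
    (integrable_indicator_iff (hcover.measurableSet n)).1 (key n).1
  have hset (n : ℕ) : ∫ ω in truncSet Z A h n, f ω ∂μ
      = ∫ ω in truncSet Z A h n, (Z + μ[R|m]) ω ∂μ := by
    rw [← integral_indicator (hcover.measurableSet n),
      ← integral_indicator (hcover.measurableSet n), ← integral_condExp hm,
      integral_congr_ae (key n).2]
  have hlim : Tendsto (fun n => ∫ ω in truncSet Z A h n, f ω ∂μ) atTop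
      (𝓝 (∫ ω, (Z + μ[R|m]) ω ∂μ)) := by
    simpa only [hset] using hcover.integral_tendsto_of_countably_generated
      (hZi.add integrable_condExp)
  have hf_nonneg : 0 ≤ᵐ[μ] f := by
    filter_upwards [hle] with ω hω
    simp only [Pi.neg_apply, Pi.add_apply, Pi.zero_apply, f] at hω ⊢
    linarith
  have hf : Integrable f μ :=
    hcover.integrable_of_integral_tendsto_of_nonneg_ae _ hfi hf_nonneg hlim
  have hint : ∫ ω, f ω ∂μ = ∫ ω, (Z + μ[R|m]) ω ∂μ := hcover.integral_eq_of_tendsto _ hf hlim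
  have hsub : Z + ∑ j ∈ A, h j * D j = f - R := by simp [f]
  refine ⟨hsub ▸ hf.sub hR, ?_⟩
  rw [hsub, integral_sub' hf hR, hint, integral_add' hZi integrable_condExp, integral_condExp hm]
  ring

end OneStep

section GainProcess

variable {ι : Type*} {m0 : MeasurableSpace Ω} {Q : Measure Ω} [IsFiniteMeasure Q]
  {ℱ : Filtration ℕ m0} {T : ℕ} {A : Finset ι} {H X : ι → ℕ → Ω → ℝ} {W : Ω → ℝ}

def gainProcess (A : Finset ι) (H X : ι → ℕ → Ω → ℝ) (t : ℕ) : Ω → ℝ :=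
  fun ω => ∑ j ∈ A, ∑ s ∈ Finset.Icc 1 t, H j s ω * (X j s ω - X j (s - 1) ω)

theorem gainProcess_zero : gainProcess A H X 0 = 0 := by
  ext ω
  simp [gainProcess]

theorem gainProcess_succ (t : ℕ) :
    gainProcess A H X (t + 1)
      = gainProcess A H X t + ∑ j ∈ A, H j (t + 1) * (X j (t + 1) - X j t) := by
  ext ω
  simp [gainProcess, Finset.sum_Icc_succ_top, Finset.sum_add_distrib]

theorem measurable_gainProcess (hH : ∀ j ∈ A, ∀ s, 1 ≤ s → s ≤ T → Measurable[ℱ (s - 1)] (H j s))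
    (hX : ∀ j ∈ A, ∀ t ≤ T, Measurable[ℱ t] (X j t)) {t : ℕ} (ht : t ≤ T) :
    Measurable[ℱ t] (gainProcess A H X t) := by
  refine Finset.measurable_sum _ fun j hj => Finset.measurable_sum _ fun s hs => ?_
  obtain ⟨hs₁, hst⟩ := Finset.mem_Icc.1 hs
  exact ((hH j hj s hs₁ (hst.trans ht)).mono (ℱ.mono (by omega)) le_rfl).mul
    (((hX j hj s (hst.trans ht)).mono (ℱ.mono hst) le_rfl).sub
      ((hX j hj (s - 1) (by omega)).mono (ℱ.mono (by omega)) le_rfl))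

theorem neg_condExp_le_gainProcess
    (hH : ∀ j ∈ A, ∀ s, 1 ≤ s → s ≤ T → Measurable[ℱ (s - 1)] (H j s))
    (hX : ∀ j ∈ A, ∀ t ≤ T, Measurable[ℱ t] (X j t)) (hXi : ∀ j ∈ A, ∀ t ≤ T, Integrable (X j t) Q)
    (hXm : ∀ j ∈ A, ∀ t < T, Q[X j (t + 1) - X j t|ℱ t] =ᵐ[Q] 0) (hW : Integrable W Q)
    (hle : -W ≤ᵐ[Q] gainProcess A H X T) {t : ℕ} (ht : t ≤ T) :
    -Q[W|ℱ t] ≤ᵐ[Q] gainProcess A H X t := by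
  induction ht using Nat.decreasingInduction with
  | self =>
    -- the one-step bound with an empty strategy conditions `-W ≤ V_T` on `ℱ T`
    exact neg_condExp_le_of_le_add_sum_mul (A := (∅ : Finset ι)) (h := 0) (D := 0) (ℱ.le T)
      (measurable_gainProcess hH hX le_rfl) (by simp) (by simp) (by simp) hW (by simpa using hle)
  | of_succ t ht ih =>
    have hstep := neg_condExp_le_of_le_add_sum_mul (ℱ.le t) (measurable_gainProcess hH hX ht.le)
      (h := fun j => H j (t + 1)) (D := fun j => X j (t + 1) - X j t)
      (fun j hj => by simpa using hH j hj (t + 1) (by omega) ht)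
      (fun j hj => (hXi j hj _ ht).sub (hXi j hj t ht.le)) (fun j hj => hXm j hj t ht)
      integrable_condExp (by rwa [← gainProcess_succ])
    filter_upwards [hstep,
      condExp_condExp_of_le (ℱ.mono t.le_succ) (ℱ.le (t + 1)) (f := W) (μ := Q)] with ω hω htower
    simpa [htower] using hω

theorem integrable_gainProcess_and_integral_eq_zero
    (hH : ∀ j ∈ A, ∀ s, 1 ≤ s → s ≤ T → Measurable[ℱ (s - 1)] (H j s))
    (hX : ∀ j ∈ A, ∀ t ≤ T, Measurable[ℱ t] (X j t)) (hXi : ∀ j ∈ A, ∀ t ≤ T, Integrable (X j t) Q)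
    (hXm : ∀ j ∈ A, ∀ t < T, Q[X j (t + 1) - X j t|ℱ t] =ᵐ[Q] 0) (hW : Integrable W Q)
    (hle : -W ≤ᵐ[Q] gainProcess A H X T) {t : ℕ} (ht : t ≤ T) :
    Integrable (gainProcess A H X t) Q ∧ ∫ ω, gainProcess A H X t ω ∂Q = 0 := by
  induction t with
  | zero => simp [gainProcess_zero]
  | succ t ih =>
    obtain ⟨hVi, hV⟩ := ih (by omega)
    rw [gainProcess_succ]
    refine (integral_add_sum_mul_eq (ℱ.le t) (measurable_gainProcess hH hX (by omega)) hVi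
      (R := Q[W|ℱ (t + 1)]) (h := fun j => H j (t + 1)) (D := fun j => X j (t + 1) - X j t)
      (fun j hj => by simpa using hH j hj (t + 1) (by omega) ht)
      (fun j hj => (hXi j hj _ ht).sub (hXi j hj t (by omega))) (fun j hj => hXm j hj t ht)
      integrable_condExp ?_).imp_right (·.trans hV)
    rw [← gainProcess_succ]
    exact neg_condExp_le_gainProcess hH hX hXi hXm hW hle ht

end GainProcess

theorem integral_add_eq_of_mem_martMeasures {m0 : MeasurableSpace Ω} {J T : ℕ} {P Q : Measure Ω}
    (ℱ : Filtration ℕ m0) {A : Finset (Fin J)} {X : Fin J → ℕ → Ω → ℝ}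
    (hQ : Q ∈ martMeasures P ℱ T A X) (hX : ∀ j ∈ A, ∀ t ≤ T, Measurable[ℱ t] (X j t))
    {k y : Ω → ℝ} (hk : k ∈ gainsSet ℱ T A X) (hy : Integrable y Q)
    (hpos : ∀ᵐ ω ∂P, 0 ≤ k ω + y ω) :
    Integrable (k + y) Q ∧ ∫ ω, (k + y) ω ∂Q = ∫ ω, y ω ∂Q := by
  obtain ⟨hprob, hQP, -, hmart⟩ := hQ
  obtain ⟨H, hH, rfl⟩ := hk
  have hXm (j : Fin J) (hj : j ∈ A) (t : ℕ) (ht : t < T) : Q[X j (t + 1) - X j t|ℱ t] =ᵐ[Q] 0 :=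
    condExp_sub_ae_eq_zero (ℱ.le t) (hX j hj t ht.le) ((hmart j hj).1 t ht.le)
      ((hmart j hj).1 _ ht) ((hmart j hj).2 t (t + 1) t.le_succ ht)
  have hle : -y ≤ᵐ[Q] gainProcess A H X T := by
    filter_upwards [hQP.ae_le hpos] with ω hω
    simp only [Pi.neg_apply, gainProcess]
    linarith
  obtain ⟨hVi, hV⟩ := integrable_gainProcess_and_integral_eq_zero hH hX
    (fun j hj => (hmart j hj).1) hXm hy hle le_rfl
  exact ⟨hVi.add hy, (integral_add' hVi hy).trans (by rw [hV, zero_add])⟩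

theorem nca_of_MeY_nonempty_general
    {Ω : Type*} [m0 : MeasurableSpace Ω]
    (P : Measure Ω)
    (T J N : ℕ)
    (F : Fin N → ℕ → MeasurableSpace Ω)
    (hFmono : ∀ i, Monotone (F i))
    (hFle : ∀ i t, F i t ≤ m0)
    (X : Fin J → ℕ → Ω → ℝ)
    (assets : Fin N → Finset (Fin J))
    (hadapted : ∀ i, ∀ j ∈ assets i, ∀ t, t ≤ T → Measurable[F i t] (X j t))
    (𝒴 : Set (Fin N → Ω → ℝ))
    (hMeY : (MeY P F T assets X 𝒴).Nonempty) :
    NCA P (fun i => gainsSet (F i) T (assets i) X) 𝒴 := by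
  obtain ⟨Q, hQ, hQy, hQsum⟩ := hMeY
  intro k y hy hk hpos
  have hagent (i : Fin N) := integral_add_eq_of_mem_martMeasures ⟨F i, hFmono i, hFle i⟩ (hQ i)
    (hadapted i) (hk i) (hQy y hy i) (hpos i)
  have hposQ (i : Fin N) : 0 ≤ᵐ[Q i] k i + y i := (hQ i).2.1.ae_le (hpos i)
  have hnonneg (i : Fin N) : 0 ≤ ∫ ω, (k i + y i) ω ∂Q i := integral_nonneg_of_ae (hposQ i)
  have hzero : ∀ i ∈ Finset.univ, ∫ ω, (k i + y i) ω ∂Q i = 0 := by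
    refine (Finset.sum_eq_zero_iff_of_nonneg fun i _ => hnonneg i).1 (le_antisymm ?_ ?_)
    · simpa only [(hagent _).2] using hQsum y hy
    · exact Finset.sum_nonneg fun i _ => hnonneg i
  intro i
  have := (hQ i).1
  exact (hQ i).2.2.1.ae_le <| (integral_eq_zero_iff_of_nonneg_ae (hposQ i) (hagent i).1).1
    (hzero i (Finset.mem_univ i))

/-- existence of equivalent collective martingale measures implies NCA. -/
theorem nca_of_MeY_nonempty
    {Ω : Type*} [m0 : MeasurableSpace Ω]
    (P : Measure Ω) [IsProbabilityMeasure P]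
    (T J N : ℕ) (hT : 1 ≤ T) (hJ : 1 ≤ J) (hN : 1 ≤ N)
    (F : Fin N → ℕ → MeasurableSpace Ω)
    (hFmono : ∀ i, Monotone (F i))
    (hFle : ∀ i t, F i t ≤ m0)
    (hFzero : ∀ i, ∀ A : Set Ω, MeasurableSet[F i 0] A → P A = 0 ∨ P A = 1)
    (X : Fin J → ℕ → Ω → ℝ)
    (assets : Fin N → Finset (Fin J))
    (hassets : ∀ i, (assets i).Nonempty)
    (hcover : ∀ j, ∃ i, j ∈ assets i)
    (hadapted : ∀ i, ∀ j ∈ assets i, ∀ t, t ≤ T → Measurable[F i t] (X j t))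
    (𝒴 : Set (Fin N → Ω → ℝ))
    (h𝒴zero : (fun (_ : Fin N) (_ : Ω) => (0 : ℝ)) ∈ 𝒴)
    (h𝒴meas : ∀ y ∈ 𝒴, ∀ i, Measurable[F i T] (y i))
    (hMeY : (MeY P F T assets X 𝒴).Nonempty) :
    NCA P (fun i => gainsSet (F i) T (assets i) X) 𝒴 :=
  nca_of_MeY_nonempty_general (m0 := m0) P T J N F hFmono hFle X assets hadapted 𝒴 hMeY

end CollectiveArb
end

section
/- Suppose 𝒴 ⊆ L^0(Ω,𝐅_T,P) is a vector subspace containing ℝ^N_0 and NCA(𝒴) holds. Then: (1) ρ^𝒴_+(0) = 0; (2) ρ^𝒴_+ is cash additive, i.e. ρ^𝒴_+(f + c) = ρ^𝒴_+(f) + Σ_{i=1}^N c^i for every c ∈ ℝ^N and f ∈ L^0(Ω,𝐅_T,P); (3) ρ^𝒴_+ is monotone increasing for the componentwise P-a.s. order and positively homogeneous (ρ^𝒴_+(λf) = λρ^𝒴_+(f) for λ > 0); (4) ρ^𝒴_+(f) < +∞ for every f ∈ L^0(Ω,𝐅_T,P) that is bounded from above. -/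
open MeasureTheory Filter Topology

namespace CollectiveArb

variable {Ω : Type*}

/-! Translating a superhedge of `f` by cash `c`, or scaling it by `λ > 0`, gives a superhedge of
`f + c`, resp. `λ f`; this yields cash additivity and positive homogeneity, while monotonicity and
finiteness on claims bounded above are immediate. The substance is `ρ(0) ≥ 0`: if a superhedge
`m + k + y ≥ 0` of `0` had total cash `∑ mⁱ < 0`, then exchanging `mⁱ − (∑ m) / N` (a zero-sum
transfer, so an element of `ℝ^N_0 ⊆ 𝒴`) would leave every agent with at least `−(∑ m) / N > 0`,
a collective arbitrage. -/

lemma zero_mem_gainsSet {J : ℕ} (F : ℕ → MeasurableSpace Ω) (T : ℕ)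
    (A : Finset (Fin J)) (X : Fin J → ℕ → Ω → ℝ) : (0 : Ω → ℝ) ∈ gainsSet F T A X :=
  ⟨0, fun _ _ _ _ _ => measurable_const, by funext; simp⟩

lemma smul_mem_gainsSet {J : ℕ} {F : ℕ → MeasurableSpace Ω} {T : ℕ}
    {A : Finset (Fin J)} {X : Fin J → ℕ → Ω → ℝ} {k : Ω → ℝ} (c : ℝ)
    (hk : k ∈ gainsSet F T A X) : (fun ω => c * k ω) ∈ gainsSet F T A X := by
  obtain ⟨H, hH, rfl⟩ := hk
  refine ⟨fun j s ω => c * H j s ω, fun j hj s h1 h2 => (hH j hj s h1 h2).const_mul c, ?_⟩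
  funext ω
  simp only [Finset.mul_sum, mul_assoc]

lemma zero_mem_zeroSum {N : ℕ} : (0 : Fin N → Ω → ℝ) ∈ zeroSum Ω N :=
  ⟨0, by simp, fun _ => rfl⟩

lemma sub_average_mem_zeroSum {N : ℕ} (hN : 0 < N) (m : Fin N → ℝ) :
    (fun i (_ : Ω) => m i - (∑ j, m j) / N) ∈ zeroSum Ω N := by
  refine ⟨fun i => m i - (∑ j, m j) / N, ?_, fun _ => rfl⟩
  have hN' : (N : ℝ) ≠ 0 := by exact_mod_cast hN.ne'
  simp only [Finset.sum_sub_distrib, Finset.sum_const, Finset.card_univ, Fintype.card_fin,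
    nsmul_eq_mul]
  field_simp
  ring

section SuperhedgingPrice

variable {N : ℕ} [MeasurableSpace Ω] {P : Measure Ω} {K : Fin N → Set (Ω → ℝ)}
  {Y : Set (Fin N → Ω → ℝ)} {f g : Fin N → Ω → ℝ}

lemma rhoPlus_le_sum {m : Fin N → ℝ} {k y : Fin N → Ω → ℝ} (hk : ∀ i, k i ∈ K i) (hy : y ∈ Y)
    (hf : ∀ i, ∀ᵐ ω ∂P, f i ω ≤ m i + k i ω + y i ω) :
    rhoPlus P K Y f ≤ ((∑ i, m i : ℝ) : EReal) :=
  sInf_le ⟨m, rfl, k, hk, y, hy, hf⟩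

lemma le_rhoPlus {z : EReal}
    (h : ∀ (m : Fin N → ℝ) (k : Fin N → Ω → ℝ), (∀ i, k i ∈ K i) → ∀ y ∈ Y,
      (∀ i, ∀ᵐ ω ∂P, f i ω ≤ m i + k i ω + y i ω) → z ≤ ((∑ i, m i : ℝ) : EReal)) :
    z ≤ rhoPlus P K Y f :=
  le_sInf fun _ ⟨m, hz, k, hk, y, hy, hf⟩ => hz ▸ h m k hk y hy hf

lemma rhoPlus_mono (hfg : ∀ i, ∀ᵐ ω ∂P, f i ω ≤ g i ω) :
    rhoPlus P K Y f ≤ rhoPlus P K Y g :=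
  le_rhoPlus fun _ _ hk _ hy hg => rhoPlus_le_sum hk hy fun i =>
    ((hfg i).and (hg i)).mono fun _ h => h.1.trans h.2

lemma rhoPlus_le_sum_of_ae_le_const {C : Fin N → ℝ} (hK : ∀ i, (0 : Ω → ℝ) ∈ K i)
    (hY : 0 ∈ Y) (hf : ∀ i, ∀ᵐ ω ∂P, f i ω ≤ C i) :
    rhoPlus P K Y f ≤ ((∑ i, C i : ℝ) : EReal) :=
  rhoPlus_le_sum hK hY fun i => (hf i).mono fun _ h => by simpa using h

lemma rhoPlus_add_const_le (c : Fin N → ℝ) :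
    rhoPlus P K Y (fun i ω => f i ω + c i) ≤ rhoPlus P K Y f + ((∑ i, c i : ℝ) : EReal) := by
  rw [← EReal.sub_le_iff_le_add (Or.inl (EReal.coe_ne_bot _)) (Or.inl (EReal.coe_ne_top _))]
  refine le_rhoPlus fun m k hk y hy hf => EReal.sub_le_of_le_add ?_
  rw [← EReal.coe_add, ← Finset.sum_add_distrib]
  exact rhoPlus_le_sum hk hy fun i => (hf i).mono fun ω h => by linarith

lemma rhoPlus_add_const (c : Fin N → ℝ) :
    rhoPlus P K Y (fun i ω => f i ω + c i) = rhoPlus P K Y f + ((∑ i, c i : ℝ) : EReal) := by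
  refine le_antisymm (rhoPlus_add_const_le c) ?_
  have h := rhoPlus_add_const_le (P := P) (K := K) (Y := Y) (f := fun i ω => f i ω + c i) (-c)
  simp only [Pi.neg_apply, add_neg_cancel_right, Finset.sum_neg_distrib, EReal.coe_neg] at h
  exact EReal.add_le_of_le_sub (by rw [sub_eq_add_neg]; exact h)

lemma rhoPlus_smul_le (hK : ∀ i, ∀ k ∈ K i, ∀ c : ℝ, (fun ω => c * k ω) ∈ K i)
    (hY : ∀ y ∈ Y, ∀ c : ℝ, (fun i ω => c * y i ω) ∈ Y) {lam : ℝ} (hlam : 0 < lam) :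
    rhoPlus P K Y (fun i ω => lam * f i ω) ≤ (lam : EReal) * rhoPlus P K Y f := by
  have hlam' : (0 : EReal) < lam := EReal.coe_pos.2 hlam
  rw [← EReal.div_le_iff_le_mul hlam' (EReal.coe_ne_top lam)]
  refine le_rhoPlus fun m k hk y hy hf => ?_
  rw [EReal.div_le_iff_le_mul hlam' (EReal.coe_ne_top lam), ← EReal.coe_mul, Finset.mul_sum]
  exact rhoPlus_le_sum (fun i => hK i _ (hk i) lam) (hY y hy lam) fun i =>
    (hf i).mono fun ω h => by have := mul_le_mul_of_nonneg_left h hlam.le; linarith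

lemma rhoPlus_smul (hK : ∀ i, ∀ k ∈ K i, ∀ c : ℝ, (fun ω => c * k ω) ∈ K i)
    (hY : ∀ y ∈ Y, ∀ c : ℝ, (fun i ω => c * y i ω) ∈ Y) {lam : ℝ} (hlam : 0 < lam) :
    rhoPlus P K Y (fun i ω => lam * f i ω) = (lam : EReal) * rhoPlus P K Y f := by
  refine le_antisymm (rhoPlus_smul_le hK hY hlam) ?_
  have h := rhoPlus_smul_le (P := P) (f := fun i ω => lam * f i ω) hK hY (inv_pos.2 hlam)
  simp only [inv_mul_cancel_left₀ hlam.ne'] at h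
  calc (lam : EReal) * rhoPlus P K Y f
      ≤ lam * (((lam⁻¹ : ℝ) : EReal) * rhoPlus P K Y (fun i ω => lam * f i ω)) :=
        mul_le_mul_of_nonneg_left h (EReal.coe_nonneg.2 hlam.le)
    _ = rhoPlus P K Y (fun i ω => lam * f i ω) := by
        rw [← mul_assoc, ← EReal.coe_mul, mul_inv_cancel₀ hlam.ne', EReal.coe_one, one_mul]

lemma NCA.zero_le_sum_of_ae_nonneg (hNCA : NCA P K Y) (hR0 : zeroSum Ω N ⊆ Y)
    (hadd : ∀ y ∈ Y, ∀ z ∈ Y, (fun i ω => y i ω + z i ω) ∈ Y) [NeZero P] (hN : 0 < N)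
    {m : Fin N → ℝ} {k y : Fin N → Ω → ℝ} (hk : ∀ i, k i ∈ K i) (hy : y ∈ Y)
    (hpos : ∀ i, ∀ᵐ ω ∂P, 0 ≤ m i + k i ω + y i ω) : 0 ≤ ∑ i, m i := by
  by_contra! hs
  have ha : (∑ i, m i) / N < 0 := div_neg_of_neg_of_pos hs (by exact_mod_cast hN)
  have hexch := hadd _ (hR0 (sub_average_mem_zeroSum hN m)) y hy
  have hzero := hNCA k _ hexch hk
    (fun i => (hpos i).mono fun ω h => by linarith) ⟨0, hN⟩
  obtain ⟨ω, h0, hω⟩ := (hzero.and (hpos ⟨0, hN⟩)).exists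
  linarith

lemma rhoPlus_zero (hNCA : NCA P K Y) (hR0 : zeroSum Ω N ⊆ Y)
    (hadd : ∀ y ∈ Y, ∀ z ∈ Y, (fun i ω => y i ω + z i ω) ∈ Y) [NeZero P] (hN : 0 < N)
    (hK : ∀ i, (0 : Ω → ℝ) ∈ K i) : rhoPlus P K Y (fun _ _ => 0) = 0 := by
  refine le_antisymm ?_ (le_rhoPlus fun m k hk y hy hf => ?_)
  · simpa using rhoPlus_le_sum_of_ae_le_const (C := 0) hK (hR0 zero_mem_zeroSum)
      fun i => .of_forall fun ω => le_rfl
  · exact_mod_cast hNCA.zero_le_sum_of_ae_nonneg hR0 hadd hN hk hy hf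

end SuperhedgingPrice

theorem rhoPlus_basic_properties_general
    {Ω : Type*} [m0 : MeasurableSpace Ω]
    (P : Measure Ω) [IsProbabilityMeasure P]
    (T J N : ℕ) (hN : 1 ≤ N)
    (F : Fin N → ℕ → MeasurableSpace Ω)
    (X : Fin J → ℕ → Ω → ℝ)
    (assets : Fin N → Finset (Fin J))
    (𝒴 : Set (Fin N → Ω → ℝ))
    (h𝒴R0 : zeroSum Ω N ⊆ 𝒴)
    (h𝒴add : ∀ y ∈ 𝒴, ∀ z ∈ 𝒴, (fun i ω => y i ω + z i ω) ∈ 𝒴)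
    (h𝒴smul : ∀ y ∈ 𝒴, ∀ c : ℝ, (fun i ω => c * y i ω) ∈ 𝒴)
    (hNCA : NCA P (fun i => gainsSet (F i) T (assets i) X) 𝒴) :
    -- (1) `ρ^𝒴₊(0) = 0`
    rhoPlus P (fun i => gainsSet (F i) T (assets i) X) 𝒴 (fun _ _ => 0) = (0 : EReal) ∧
    -- (2) cash additivity
    (∀ f : Fin N → Ω → ℝ, (∀ i, Measurable[F i T] (f i)) → ∀ c : Fin N → ℝ,
      rhoPlus P (fun i => gainsSet (F i) T (assets i) X) 𝒴 (fun i ω => f i ω + c i)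
        = rhoPlus P (fun i => gainsSet (F i) T (assets i) X) 𝒴 f + ((∑ i, c i : ℝ) : EReal)) ∧
    -- (3a) monotonicity
    (∀ f g : Fin N → Ω → ℝ, (∀ i, Measurable[F i T] (f i)) → (∀ i, Measurable[F i T] (g i)) →
      (∀ i, ∀ᵐ ω ∂P, f i ω ≤ g i ω) →
      rhoPlus P (fun i => gainsSet (F i) T (assets i) X) 𝒴 f
        ≤ rhoPlus P (fun i => gainsSet (F i) T (assets i) X) 𝒴 g) ∧
    -- (3b) positive homogeneity
    (∀ f : Fin N → Ω → ℝ, (∀ i, Measurable[F i T] (f i)) → ∀ lam : ℝ, 0 < lam →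
      rhoPlus P (fun i => gainsSet (F i) T (assets i) X) 𝒴 (fun i ω => lam * f i ω)
        = ((lam : ℝ) : EReal) * rhoPlus P (fun i => gainsSet (F i) T (assets i) X) 𝒴 f) ∧
    -- (4) finiteness on claims bounded from above
    (∀ f : Fin N → Ω → ℝ, (∀ i, Measurable[F i T] (f i)) →
      (∃ C : Fin N → ℝ, ∀ i, ∀ᵐ ω ∂P, f i ω ≤ C i) →
      rhoPlus P (fun i => gainsSet (F i) T (assets i) X) 𝒴 f < ⊤) := by
  set K : Fin N → Set (Ω → ℝ) := fun i => gainsSet (F i) T (assets i) X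
  have hK0 : ∀ i, (0 : Ω → ℝ) ∈ K i := fun i => zero_mem_gainsSet _ _ _ _
  have hKsmul : ∀ i, ∀ k ∈ K i, ∀ c : ℝ, (fun ω => c * k ω) ∈ K i :=
    fun _ _ hk c => smul_mem_gainsSet c hk
  refine ⟨rhoPlus_zero hNCA h𝒴R0 h𝒴add hN hK0, fun f _ c => rhoPlus_add_const c,
    fun f g _ _ hfg => rhoPlus_mono hfg, fun f _ lam hlam => rhoPlus_smul hKsmul h𝒴smul hlam,
    fun f _ ⟨C, hC⟩ => ?_⟩
  exact (rhoPlus_le_sum_of_ae_le_const hK0 (h𝒴R0 zero_mem_zeroSum) hC).trans_lt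
    (EReal.coe_lt_top _)

/-- basic properties of the collective superhedging price (Lemma lemmarho, Items 1-4). -/
theorem rhoPlus_basic_properties
    {Ω : Type*} [m0 : MeasurableSpace Ω]
    (P : Measure Ω) [IsProbabilityMeasure P]
    (T J N : ℕ) (hT : 1 ≤ T) (hJ : 1 ≤ J) (hN : 1 ≤ N)
    (F : Fin N → ℕ → MeasurableSpace Ω)
    (hFmono : ∀ i, Monotone (F i))
    (hFle : ∀ i t, F i t ≤ m0)
    (hFzero : ∀ i, ∀ A : Set Ω, MeasurableSet[F i 0] A → P A = 0 ∨ P A = 1)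
    (X : Fin J → ℕ → Ω → ℝ)
    (assets : Fin N → Finset (Fin J))
    (hassets : ∀ i, (assets i).Nonempty)
    (hcover : ∀ j, ∃ i, j ∈ assets i)
    (hadapted : ∀ i, ∀ j ∈ assets i, ∀ t, t ≤ T → Measurable[F i t] (X j t))
    (𝒴 : Set (Fin N → Ω → ℝ))
    (h𝒴meas : ∀ y ∈ 𝒴, ∀ i, Measurable[F i T] (y i))
    (h𝒴R0 : zeroSum Ω N ⊆ 𝒴)
    (h𝒴add : ∀ y ∈ 𝒴, ∀ z ∈ 𝒴, (fun i ω => y i ω + z i ω) ∈ 𝒴)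
    (h𝒴smul : ∀ y ∈ 𝒴, ∀ c : ℝ, (fun i ω => c * y i ω) ∈ 𝒴)
    (hNCA : NCA P (fun i => gainsSet (F i) T (assets i) X) 𝒴) :
    -- (1) `ρ^𝒴₊(0) = 0`
    rhoPlus P (fun i => gainsSet (F i) T (assets i) X) 𝒴 (fun _ _ => 0) = (0 : EReal) ∧
    -- (2) cash additivity
    (∀ f : Fin N → Ω → ℝ, (∀ i, Measurable[F i T] (f i)) → ∀ c : Fin N → ℝ,
      rhoPlus P (fun i => gainsSet (F i) T (assets i) X) 𝒴 (fun i ω => f i ω + c i)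
        = rhoPlus P (fun i => gainsSet (F i) T (assets i) X) 𝒴 f + ((∑ i, c i : ℝ) : EReal)) ∧
    -- (3a) monotonicity
    (∀ f g : Fin N → Ω → ℝ, (∀ i, Measurable[F i T] (f i)) → (∀ i, Measurable[F i T] (g i)) →
      (∀ i, ∀ᵐ ω ∂P, f i ω ≤ g i ω) →
      rhoPlus P (fun i => gainsSet (F i) T (assets i) X) 𝒴 f
        ≤ rhoPlus P (fun i => gainsSet (F i) T (assets i) X) 𝒴 g) ∧
    -- (3b) positive homogeneity
    (∀ f : Fin N → Ω → ℝ, (∀ i, Measurable[F i T] (f i)) → ∀ lam : ℝ, 0 < lam →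
      rhoPlus P (fun i => gainsSet (F i) T (assets i) X) 𝒴 (fun i ω => lam * f i ω)
        = ((lam : ℝ) : EReal) * rhoPlus P (fun i => gainsSet (F i) T (assets i) X) 𝒴 f) ∧
    -- (4) finiteness on claims bounded from above
    (∀ f : Fin N → Ω → ℝ, (∀ i, Measurable[F i T] (f i)) →
      (∃ C : Fin N → ℝ, ∀ i, ∀ᵐ ω ∂P, f i ω ≤ C i) →
      rhoPlus P (fun i => gainsSet (F i) T (assets i) X) 𝒴 f < ⊤) :=
  rhoPlus_basic_properties_general (m0 := m0) P T J N hN F X assets 𝒴 h𝒴R0 h𝒴add h𝒴smul hNCA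

end CollectiveArb
end

section
/- Suppose 𝒴 ⊆ L^0(Ω,𝐅_T,P) is a vector subspace containing ℝ^N_0, NCA(𝒴) holds, and K^𝒴 is closed under componentwise P-a.s. convergence of sequences. Then for every f ∈ L^0(Ω,𝐅_T,P): ρ^𝒴_+(f) > −∞ and ρ^𝒴_−(f) < +∞; if ρ^𝒴_+(f) < +∞ then ρ^𝒴_+(f) is attained and moreover f − (ρ^𝒴_+(f)/N)·𝟏 ∈ K^𝒴, where 𝟏 = (1,…,1) ∈ ℝ^N; symmetrically, if ρ^𝒴_−(f) > −∞ then ρ^𝒴_−(f) is attained. -/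
open MeasureTheory Filter Topology

namespace CollectiveArb

variable {Ω : Type*}

lemma gainsSet_measurable {J : ℕ} {F : ℕ → MeasurableSpace Ω} {T : ℕ}
    {A : Finset (Fin J)} {X : Fin J → ℕ → Ω → ℝ}
    (hFmono : Monotone F)
    (hadapted : ∀ j ∈ A, ∀ t, t ≤ T → Measurable[F t] (X j t))
    {g : Ω → ℝ} (hg : g ∈ gainsSet F T A X) : Measurable[F T] g := by
  obtain ⟨H, hH, rfl⟩ := hg
  refine Finset.measurable_sum _ fun j hj => Finset.measurable_sum _ fun s hs => ?_
  rw [Finset.mem_Icc] at hs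
  have h1 : Measurable[F T] (H j s) :=
    (hH j hj s hs.1 hs.2).mono (hFmono (le_trans (Nat.sub_le s 1) hs.2)) le_rfl
  have h2 : Measurable[F T] (X j s) :=
    (hadapted j hj s hs.2).mono (hFmono hs.2) le_rfl
  have h3 : Measurable[F T] (X j (s - 1)) :=
    (hadapted j hj (s - 1) (le_trans (Nat.sub_le s 1) hs.2)).mono
      (hFmono (le_trans (Nat.sub_le s 1) hs.2)) le_rfl
  exact h1.mul (h2.sub h3)

lemma gainsSet_smul {J : ℕ} {F : ℕ → MeasurableSpace Ω} {T : ℕ}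
    {A : Finset (Fin J)} {X : Fin J → ℕ → Ω → ℝ} {g : Ω → ℝ}
    (hg : g ∈ gainsSet F T A X) (c : ℝ) : (fun ω => c * g ω) ∈ gainsSet F T A X := by
  obtain ⟨H, hH, rfl⟩ := hg
  refine ⟨fun j s ω => c * H j s ω, fun j hj s h1 h2 => (hH j hj s h1 h2).const_mul c, ?_⟩
  funext ω
  simp only [Finset.mul_sum, mul_assoc]

lemma gainsSet_neg {J : ℕ} {F : ℕ → MeasurableSpace Ω} {T : ℕ}
    {A : Finset (Fin J)} {X : Fin J → ℕ → Ω → ℝ} {g : Ω → ℝ}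
    (hg : g ∈ gainsSet F T A X) : (fun ω => -g ω) ∈ gainsSet F T A X := by
  have := gainsSet_smul hg (-1)
  simpa only [neg_one_mul] using this

/-- finiteness and attainment of super/subhedging prices under closedness (Lemma lemmarho, Item 5). -/
theorem rho_attained_of_closed
    {Ω : Type*} [m0 : MeasurableSpace Ω]
    (P : Measure Ω) [IsProbabilityMeasure P]
    (T J N : ℕ) (hT : 1 ≤ T) (hJ : 1 ≤ J) (hN : 1 ≤ N)
    (F : Fin N → ℕ → MeasurableSpace Ω)
    (hFmono : ∀ i, Monotone (F i))
    (hFle : ∀ i t, F i t ≤ m0)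
    (hFzero : ∀ i, ∀ A : Set Ω, MeasurableSet[F i 0] A → P A = 0 ∨ P A = 1)
    (X : Fin J → ℕ → Ω → ℝ)
    (assets : Fin N → Finset (Fin J))
    (hassets : ∀ i, (assets i).Nonempty)
    (hcover : ∀ j, ∃ i, j ∈ assets i)
    (hadapted : ∀ i, ∀ j ∈ assets i, ∀ t, t ≤ T → Measurable[F i t] (X j t))
    (𝒴 : Set (Fin N → Ω → ℝ))
    (h𝒴meas : ∀ y ∈ 𝒴, ∀ i, Measurable[F i T] (y i))
    (h𝒴R0 : zeroSum Ω N ⊆ 𝒴)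
    (h𝒴add : ∀ y ∈ 𝒴, ∀ z ∈ 𝒴, (fun i ω => y i ω + z i ω) ∈ 𝒴)
    (h𝒴smul : ∀ y ∈ 𝒴, ∀ c : ℝ, (fun i ω => c * y i ω) ∈ 𝒴)
    (hNCA : NCA P (fun i => gainsSet (F i) T (assets i) X) 𝒴)
    (hclosed : ClosedAS P (fun i => F i T)
      (KY P (fun i => F i T) (fun i => gainsSet (F i) T (assets i) X) 𝒴))
    (f : Fin N → Ω → ℝ) (hfmeas : ∀ i, Measurable[F i T] (f i)) :
    ⊥ < rhoPlus P (fun i => gainsSet (F i) T (assets i) X) 𝒴 f ∧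
    rhoMinus P (fun i => gainsSet (F i) T (assets i) X) 𝒴 f < ⊤ ∧
    (rhoPlus P (fun i => gainsSet (F i) T (assets i) X) 𝒴 f < ⊤ →
      rhoPlusAttained P (fun i => gainsSet (F i) T (assets i) X) 𝒴 f ∧
      (fun i ω => f i ω -
          (rhoPlus P (fun i => gainsSet (F i) T (assets i) X) 𝒴 f).toReal / (N : ℝ))
        ∈ KY P (fun i => F i T) (fun i => gainsSet (F i) T (assets i) X) 𝒴) ∧
    (⊥ < rhoMinus P (fun i => gainsSet (F i) T (assets i) X) 𝒴 f →
      rhoMinusAttained P (fun i => gainsSet (F i) T (assets i) X) 𝒴 f) := by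
  classical
  set K : Fin N → Set (Ω → ℝ) := fun i => gainsSet (F i) T (assets i) X with hKdef
  set 𝒦 : Set (Fin N → Ω → ℝ) := KY P (fun i => F i T) K 𝒴 with h𝒦def
  have hNRpos : (0:ℝ) < N := by exact_mod_cast hN
  have hN0 : (N:ℝ) ≠ 0 := ne_of_gt hNRpos
  haveI : (MeasureTheory.ae P).NeBot := ae_neBot.mpr (IsProbabilityMeasure.ne_zero P)
  have hKmeas : ∀ i, ∀ g ∈ K i, Measurable[F i T] g := fun i g hg =>
    gainsSet_measurable (hFmono i) (fun j hj t ht => hadapted i j hj t ht) hg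
  have hKneg : ∀ i, ∀ g ∈ K i, (fun ω => -g ω) ∈ K i := fun i g hg => gainsSet_neg hg
  -- 𝒦 is a cone
  have hKYsmul : ∀ g ∈ 𝒦, ∀ c : ℝ, 0 ≤ c → (fun i ω => c * g i ω) ∈ 𝒦 := by
    rintro g ⟨k, l, y, hy, hk, hl, heq⟩ c hc
    refine ⟨fun i ω => c * k i ω, fun i ω => c * l i ω, fun i ω => c * y i ω,
      h𝒴smul y hy c, fun i => gainsSet_smul (hk i) c,
      fun i => ⟨(hl i).1.const_mul c, (hl i).2.mono fun ω hω => mul_nonneg hc hω⟩,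
      fun i => ?_⟩
    funext ω
    have h2 : g i ω = k i ω - l i ω + y i ω := congrFun (heq i) ω
    show c * g i ω = c * k i ω - c * l i ω + c * y i ω
    rw [h2]; ring
  -- the constant vector 1/N is not in 𝒦 (by NCA)
  have hnotmem : (fun (_ : Fin N) (_ : Ω) => 1 / (N:ℝ)) ∉ 𝒦 := by
    rintro ⟨k, l, y, hy, hk, hl, heq⟩
    have hpt : ∀ i ω, k i ω + y i ω = 1/(N:ℝ) + l i ω := by
      intro i ω
      have h2 : (1:ℝ)/(N:ℝ) = k i ω - l i ω + y i ω := congrFun (heq i) ω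
      linarith
    have h1N : (0:ℝ) < 1/(N:ℝ) := one_div_pos.mpr hNRpos
    have hz := hNCA k y hy hk (fun i => (hl i).2.mono fun ω hω => by
      rw [hpt i ω]; linarith)
    obtain ⟨ω, h0, hlω⟩ := ((hz ⟨0, hN⟩).and (hl ⟨0, hN⟩).2).exists
    have := hpt ⟨0, hN⟩ ω
    simp only at h0
    linarith
  -- the sets A g
  set A : (Fin N → Ω → ℝ) → Set ℝ :=
    fun g => {c | (fun i ω => g i ω - c / (N:ℝ)) ∈ 𝒦} with hAdef
  have hAbdd : ∀ g : Fin N → Ω → ℝ, BddBelow (A g) := by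
    intro g
    by_contra hbd
    rw [not_bddBelow_iff] at hbd
    choose c hcA hclt using fun n : ℕ => hbd (-((n:ℝ)+1))
    have hcneg : ∀ n, c n < 0 := fun n =>
      lt_of_lt_of_le (hclt n) (by linarith [(Nat.cast_nonneg n : (0:ℝ) ≤ n)])
    have hmem : ∀ n, (fun i ω => (-1/(c n)) * (g i ω - c n/(N:ℝ))) ∈ 𝒦 := fun n =>
      hKYsmul _ (hcA n) _ (le_of_lt (div_pos_iff.mpr (Or.inr ⟨by norm_num, hcneg n⟩)))
    have t0 : Tendsto (fun n : ℕ => -(c n)) atTop atTop :=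
      tendsto_atTop_mono (fun n => by linarith [hclt n]) tendsto_natCast_atTop_atTop
    have t1 : Tendsto (fun n => (c n)⁻¹) atTop (𝓝 0) := by
      have h := tendsto_inv_atTop_zero.comp t0
      have h2 := h.neg
      simp only [Function.comp_def, inv_neg, neg_neg, neg_zero] at h2
      exact h2
    have hlim : ∀ i, ∀ᵐ ω ∂P,
        Tendsto (fun n => (-1/(c n)) * (g i ω - c n/(N:ℝ))) atTop (𝓝 (1/(N:ℝ))) := by
      intro i
      refine Eventually.of_forall fun ω => ?_
      have heqn : ∀ n, (-1/(c n)) * (g i ω - c n/(N:ℝ))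
          = -((c n)⁻¹ * g i ω) + 1/(N:ℝ) := by
        intro n
        have hc0 : c n ≠ 0 := ne_of_lt (hcneg n)
        field_simp
        ring
      have h := ((t1.mul_const (g i ω)).neg.add_const (1/(N:ℝ)))
      simp only [zero_mul, neg_zero, zero_add] at h
      exact h.congr fun n => (heqn n).symm
    exact hnotmem (hclosed (fun n => fun i ω => (-1/(c n)) * (g i ω - c n/(N:ℝ)))
      (fun _ _ => 1/(N:ℝ)) hmem (fun i => measurable_const) hlim)
  have hAclosed : ∀ g : Fin N → Ω → ℝ, (∀ i, Measurable[F i T] (g i)) →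
      (A g).Nonempty → sInf (A g) ∈ A g := by
    intro g hg hne
    have hbdd := hAbdd g
    have hex : ∀ n : ℕ, ∃ x ∈ A g, x < sInf (A g) + 1/((n:ℝ)+1) := fun n =>
      Real.lt_sInf_add_pos hne (by positivity)
    choose c hcA hclt using hex
    have hge : ∀ n, sInf (A g) ≤ c n := fun n => csInf_le hbdd (hcA n)
    have hten : Tendsto c atTop (𝓝 (sInf (A g))) := by
      refine tendsto_of_tendsto_of_tendsto_of_le_of_le tendsto_const_nhds ?_ hge
        (fun n => (hclt n).le)
      have h := tendsto_one_div_add_atTop_nhds_zero_nat.const_add (sInf (A g))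
      simpa using h
    exact hclosed (fun n => fun i ω => g i ω - c n/(N:ℝ))
      (fun i ω => g i ω - sInf (A g)/(N:ℝ)) (fun n => hcA n)
      (fun i => (hg i).sub measurable_const)
      (fun i => Eventually.of_forall fun ω => tendsto_const_nhds.sub (hten.div_const _))
  have hsup_to_A : ∀ g : Fin N → Ω → ℝ, (∀ i, Measurable[F i T] (g i)) →
      ∀ (m : Fin N → ℝ) (k y : Fin N → Ω → ℝ), y ∈ 𝒴 → (∀ i, k i ∈ K i) →
      (∀ i, ∀ᵐ ω ∂P, g i ω ≤ m i + k i ω + y i ω) → (∑ i, m i) ∈ A g := by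
    intro g hg m k y hy hk hle
    have hNcc : (N:ℝ) * ((∑ i, m i)/(N:ℝ)) = ∑ i, m i := by field_simp
    have hzmem : (fun (i : Fin N) (_ : Ω) => m i - (∑ i, m i)/(N:ℝ)) ∈ 𝒴 :=
      h𝒴R0 ⟨fun i => m i - (∑ i, m i)/(N:ℝ), by
        rw [Finset.sum_sub_distrib, Finset.sum_const, Finset.card_univ, Fintype.card_fin,
          nsmul_eq_mul, hNcc, sub_self], fun i => rfl⟩
    have hymem : (fun i ω => (m i - (∑ i, m i)/(N:ℝ)) + y i ω) ∈ 𝒴 :=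
      h𝒴add _ hzmem y hy
    refine ⟨k, fun i ω => m i + k i ω + y i ω - g i ω,
      fun i ω => (m i - (∑ i, m i)/(N:ℝ)) + y i ω, hymem, hk,
      fun i => ⟨((measurable_const.add (hKmeas i (k i) (hk i))).add (h𝒴meas y hy i)).sub (hg i),
        (hle i).mono fun ω hω => by
          show 0 ≤ m i + k i ω + y i ω - g i ω; linarith⟩, fun i => ?_⟩
    funext ω
    show g i ω - (∑ i, m i)/(N:ℝ)
      = k i ω - (m i + k i ω + y i ω - g i ω) + ((m i - (∑ i, m i)/(N:ℝ)) + y i ω)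
    ring
  have hA_to_sup : ∀ (g : Fin N → Ω → ℝ) (c : ℝ), c ∈ A g →
      ∃ k y : Fin N → Ω → ℝ, y ∈ 𝒴 ∧ (∀ i, k i ∈ K i) ∧
        ∀ i, ∀ᵐ ω ∂P, g i ω ≤ c/(N:ℝ) + k i ω + y i ω := by
    rintro g c ⟨k, l, y, hy, hk, hl, heq⟩
    refine ⟨k, y, hy, hk, fun i => (hl i).2.mono fun ω hω => ?_⟩
    have h2 : g i ω - c/(N:ℝ) = k i ω - l i ω + y i ω := congrFun (heq i) ω
    linarith
  have hsumconst : ∀ c : ℝ, (∑ _i : Fin N, c/(N:ℝ)) = c := by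
    intro c
    rw [Finset.sum_const, Finset.card_univ, Fintype.card_fin, nsmul_eq_mul]
    field_simp
  -- rhoPlus analysis
  have hrpdef : rhoPlus P K 𝒴 f = sInf {z : EReal | ∃ m : Fin N → ℝ,
      z = ((∑ i, m i : ℝ) : EReal) ∧ ∃ k : Fin N → Ω → ℝ, (∀ i, k i ∈ K i) ∧
        ∃ y ∈ 𝒴, ∀ i, ∀ᵐ ω ∂P, f i ω ≤ m i + k i ω + y i ω} := rfl
  have hplus : ⊥ < rhoPlus P K 𝒴 f ∧ (rhoPlus P K 𝒴 f < ⊤ →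
      rhoPlusAttained P K 𝒴 f ∧
      (fun i ω => f i ω - (rhoPlus P K 𝒴 f).toReal / (N:ℝ)) ∈ 𝒦) := by
    by_cases hAne : (A f).Nonempty
    · have haA : sInf (A f) ∈ A f := hAclosed f hfmeas hAne
      obtain ⟨k, y, hy, hk, hle⟩ := hA_to_sup f (sInf (A f)) haA
      have hmemSP : ((sInf (A f) : ℝ) : EReal) ∈ {z : EReal | ∃ m : Fin N → ℝ,
          z = ((∑ i, m i : ℝ) : EReal) ∧ ∃ k : Fin N → Ω → ℝ, (∀ i, k i ∈ K i) ∧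
            ∃ y ∈ 𝒴, ∀ i, ∀ᵐ ω ∂P, f i ω ≤ m i + k i ω + y i ω} := by
        refine ⟨fun _ => sInf (A f)/(N:ℝ), ?_, k, hk, y, hy, hle⟩
        rw [hsumconst]
      have hrp : rhoPlus P K 𝒴 f = ((sInf (A f) : ℝ) : EReal) := by
        rw [hrpdef]
        apply le_antisymm (sInf_le hmemSP)
        refine le_sInf ?_
        rintro z ⟨m, rfl, k', hk', y', hy', hle'⟩
        exact EReal.coe_le_coe_iff.mpr
          (csInf_le (hAbdd f) (hsup_to_A f hfmeas m k' y' hy' hk' hle'))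
      refine ⟨by rw [hrp]; exact EReal.bot_lt_coe _, fun _ => ⟨?_, ?_⟩⟩
      · exact ⟨fun _ => sInf (A f)/(N:ℝ), k, y, hy, hk, hle, by rw [hrp, hsumconst]⟩
      · simp only [hrp, EReal.toReal_coe]
        exact haA
    · have hSPe : {z : EReal | ∃ m : Fin N → ℝ,
          z = ((∑ i, m i : ℝ) : EReal) ∧ ∃ k : Fin N → Ω → ℝ, (∀ i, k i ∈ K i) ∧
            ∃ y ∈ 𝒴, ∀ i, ∀ᵐ ω ∂P, f i ω ≤ m i + k i ω + y i ω} = ∅ := by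
        rw [Set.eq_empty_iff_forall_notMem]
        rintro z ⟨m, rfl, k', hk', y', hy', hle'⟩
        exact hAne ⟨∑ i, m i, hsup_to_A f hfmeas m k' y' hy' hk' hle'⟩
      have hrp : rhoPlus P K 𝒴 f = ⊤ := by rw [hrpdef, hSPe, sInf_empty]
      exact ⟨by rw [hrp]; exact bot_lt_top,
        fun h => absurd h (by rw [hrp]; exact lt_irrefl _)⟩
  -- rhoMinus analysis
  set gneg : Fin N → Ω → ℝ := fun i ω => -(f i ω) with hgneg
  have hgnegmeas : ∀ i, Measurable[F i T] (gneg i) := fun i => (hfmeas i).neg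
  have hrmdef : rhoMinus P K 𝒴 f = sSup {z : EReal | ∃ m : Fin N → ℝ,
      z = ((∑ i, m i : ℝ) : EReal) ∧ ∃ k : Fin N → Ω → ℝ, (∀ i, k i ∈ K i) ∧
        ∃ y ∈ 𝒴, ∀ i, ∀ᵐ ω ∂P, m i + k i ω - y i ω ≤ f i ω} := rfl
  have hsubB : ∀ (m : Fin N → ℝ) (k y : Fin N → Ω → ℝ), y ∈ 𝒴 → (∀ i, k i ∈ K i) →
      (∀ i, ∀ᵐ ω ∂P, m i + k i ω - y i ω ≤ f i ω) → (-(∑ i, m i)) ∈ A gneg := by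
    intro m k y hy hk hle
    have h := hsup_to_A gneg hgnegmeas (fun i => -(m i)) (fun i ω => -(k i ω)) y hy
      (fun i => hKneg i (k i) (hk i))
      (fun i => (hle i).mono fun ω hω => by
        show gneg i ω ≤ -(m i) + -(k i ω) + y i ω
        show -(f i ω) ≤ -(m i) + -(k i ω) + y i ω
        linarith)
    rwa [Finset.sum_neg_distrib] at h
  have hB_to_sub : ∀ c : ℝ, (-c) ∈ A gneg →
      ∃ k y : Fin N → Ω → ℝ, y ∈ 𝒴 ∧ (∀ i, k i ∈ K i) ∧
        ∀ i, ∀ᵐ ω ∂P, c/(N:ℝ) + k i ω - y i ω ≤ f i ω := by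
    intro c hc
    obtain ⟨k, y, hy, hk, hle⟩ := hA_to_sup gneg (-c) hc
    refine ⟨fun i ω => -(k i ω), y, hy, fun i => hKneg i (k i) (hk i),
      fun i => (hle i).mono fun ω hω => ?_⟩
    show c/(N:ℝ) + -(k i ω) - y i ω ≤ f i ω
    have hω' : -(f i ω) ≤ (-c)/(N:ℝ) + k i ω + y i ω := hω
    have hnd : (-c)/(N:ℝ) = -(c/(N:ℝ)) := neg_div _ _
    linarith
  have hminus : rhoMinus P K 𝒴 f < ⊤ ∧
      (⊥ < rhoMinus P K 𝒴 f → rhoMinusAttained P K 𝒴 f) := by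
    by_cases hBne : (A gneg).Nonempty
    · have hbA : sInf (A gneg) ∈ A gneg := hAclosed gneg hgnegmeas hBne
      obtain ⟨k, y, hy, hk, hle⟩ := hB_to_sub (-(sInf (A gneg)))
        (by rw [neg_neg]; exact hbA)
      have hmemSM : ((-(sInf (A gneg)) : ℝ) : EReal) ∈ {z : EReal | ∃ m : Fin N → ℝ,
          z = ((∑ i, m i : ℝ) : EReal) ∧ ∃ k : Fin N → Ω → ℝ, (∀ i, k i ∈ K i) ∧
            ∃ y ∈ 𝒴, ∀ i, ∀ᵐ ω ∂P, m i + k i ω - y i ω ≤ f i ω} := by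
        refine ⟨fun _ => (-(sInf (A gneg)))/(N:ℝ), ?_, k, hk, y, hy, hle⟩
        rw [hsumconst]
      have hrm : rhoMinus P K 𝒴 f = ((-(sInf (A gneg)) : ℝ) : EReal) := by
        rw [hrmdef]
        apply le_antisymm _ (le_sSup hmemSM)
        refine sSup_le ?_
        rintro z ⟨m, rfl, k', hk', y', hy', hle'⟩
        have h := csInf_le (hAbdd gneg) (hsubB m k' y' hy' hk' hle')
        exact EReal.coe_le_coe_iff.mpr (by linarith)
      refine ⟨by rw [hrm]; exact EReal.coe_lt_top _, fun _ => ?_⟩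
      exact ⟨fun _ => (-(sInf (A gneg)))/(N:ℝ), k, y, hy, hk, hle,
        by rw [hrm, hsumconst]⟩
    · have hSMe : {z : EReal | ∃ m : Fin N → ℝ,
          z = ((∑ i, m i : ℝ) : EReal) ∧ ∃ k : Fin N → Ω → ℝ, (∀ i, k i ∈ K i) ∧
            ∃ y ∈ 𝒴, ∀ i, ∀ᵐ ω ∂P, m i + k i ω - y i ω ≤ f i ω} = ∅ := by
        rw [Set.eq_empty_iff_forall_notMem]
        rintro z ⟨m, rfl, k', hk', y', hy', hle'⟩
        exact hBne ⟨-(∑ i, m i), hsubB m k' y' hy' hk' hle'⟩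
      have hrm : rhoMinus P K 𝒴 f = ⊥ := by rw [hrmdef, hSMe, sSup_empty]
      exact ⟨by rw [hrm]; exact bot_lt_top,
        fun h => absurd h (by rw [hrm]; exact lt_irrefl _)⟩
  exact ⟨hplus.1, hminus.1, fun h => hplus.2 h, hminus.2⟩



end CollectiveArb
end

section
/- Suppose 𝒴 ⊆ L^0(Ω,𝐅_T,P) is a vector subspace containing ℝ^N_0 and NCA(𝒴) holds. Then ρ^𝒴_−(f) ≤ ρ^𝒴_+(f) for every f ∈ L^0(Ω,𝐅_T,P) (with the conventions inf ∅ := +∞ and sup ∅ := −∞). -/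
/-!
Subtracting a subhedge `m + k - y ≤ f` from a superhedge `f ≤ m' + k' + y'` leaves the gains
`k' - k` and the exchange `y' + y` hedging the deterministic endowment `m' - m` to a nonnegative
position; under NCA such an endowment must have nonnegative total, i.e. `∑ m ≤ ∑ m'`.
-/

open MeasureTheory Filter Topology

namespace CollectiveArb

variable {Ω : Type*}

lemma sub_mem_gainsSet {J : ℕ} {F : ℕ → MeasurableSpace Ω} {T : ℕ}
    {A : Finset (Fin J)} {X : Fin J → ℕ → Ω → ℝ} {g g' : Ω → ℝ}
    (hg : g ∈ gainsSet F T A X) (hg' : g' ∈ gainsSet F T A X) :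
    (fun ω => g' ω - g ω) ∈ gainsSet F T A X := by
  obtain ⟨H, hH, rfl⟩ := hg
  obtain ⟨H', hH', rfl⟩ := hg'
  refine ⟨fun j s ω => H' j s ω - H j s ω,
    fun j hj s h1 h2 => (hH' j hj s h1 h2).sub (hH j hj s h1 h2), ?_⟩
  funext ω
  simp only [sub_mul, Finset.sum_sub_distrib]

section Hedging

variable {N : ℕ} [MeasurableSpace Ω] {P : Measure Ω} {K : Fin N → Set (Ω → ℝ)}
  {𝒴 : Set (Fin N → Ω → ℝ)}

/-- If `∑ m < 0`, adding the zero-sum exchange `x i = m i - (∑ m) / N` to `k + y` gives an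
arbitrage paying `-(∑ m) / N > 0` to every agent. -/
theorem NCA.sum_nonneg [NeZero P] (hNCA : NCA P K 𝒴) (h𝒴R0 : zeroSum Ω N ⊆ 𝒴)
    (h𝒴add : ∀ y ∈ 𝒴, ∀ z ∈ 𝒴, (fun i ω => y i ω + z i ω) ∈ 𝒴)
    {m : Fin N → ℝ} {k y : Fin N → Ω → ℝ} (hk : ∀ i, k i ∈ K i) (hy : y ∈ 𝒴)
    (hnonneg : ∀ i, ∀ᵐ ω ∂P, 0 ≤ m i + k i ω + y i ω) :
    0 ≤ ∑ i, m i := by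
  by_contra! hneg
  have hN : 0 < N := Nat.pos_of_ne_zero <| by rintro rfl; simp at hneg
  set ε : ℝ := -(∑ i, m i) / N
  have hε : 0 < ε := div_pos (neg_pos.mpr hneg) (Nat.cast_pos.mpr hN)
  have hx : (fun i (_ : Ω) => m i + ε) ∈ 𝒴 := by
    refine h𝒴R0 ⟨fun i => m i + ε, ?_, fun i => rfl⟩
    simp only [ε, Finset.sum_add_distrib, Finset.sum_const, Finset.card_univ,
      Fintype.card_fin, nsmul_eq_mul]
    field_simp
    ring
  have hyx := h𝒴add y hy _ hx
  obtain ⟨i₀⟩ : Nonempty (Fin N) := ⟨⟨0, hN⟩⟩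
  have hpos : ∀ i, ∀ᵐ ω ∂P, ε ≤ k i ω + (y i ω + (m i + ε)) := fun i => by
    filter_upwards [hnonneg i] with ω hω
    linarith
  have harb : ∀ᵐ ω ∂P, False := by
    filter_upwards [hpos i₀, hNCA k _ hyx hk (fun i => (hpos i).mono fun _ h => hε.le.trans h) i₀]
      with ω hω hzero
    linarith
  exact harb.exists.elim fun _ h => h

theorem NCA.sum_le_sum_of_hedges [NeZero P] (hNCA : NCA P K 𝒴) (h𝒴R0 : zeroSum Ω N ⊆ 𝒴)
    (h𝒴add : ∀ y ∈ 𝒴, ∀ z ∈ 𝒴, (fun i ω => y i ω + z i ω) ∈ 𝒴)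
    (hK : ∀ i, ∀ g ∈ K i, ∀ g' ∈ K i, (fun ω => g' ω - g ω) ∈ K i) {f : Fin N → Ω → ℝ}
    {m m' : Fin N → ℝ} {k k' y y' : Fin N → Ω → ℝ} (hk : ∀ i, k i ∈ K i) (hk' : ∀ i, k' i ∈ K i)
    (hy : y ∈ 𝒴) (hy' : y' ∈ 𝒴) (hsub : ∀ i, ∀ᵐ ω ∂P, m i + k i ω - y i ω ≤ f i ω)
    (hsuper : ∀ i, ∀ᵐ ω ∂P, f i ω ≤ m' i + k' i ω + y' i ω) :
    ∑ i, m i ≤ ∑ i, m' i := by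
  have hdiff := hNCA.sum_nonneg h𝒴R0 h𝒴add (m := fun i => m' i - m i)
    (fun i => hK i _ (hk i) _ (hk' i)) (h𝒴add _ hy' _ hy) fun i => by
      filter_upwards [hsub i, hsuper i] with ω h₁ h₂
      linarith
  simpa only [Finset.sum_sub_distrib, sub_nonneg] using hdiff

end Hedging

theorem rhoMinus_le_rhoPlus_general
    {Ω : Type*} [m0 : MeasurableSpace Ω]
    (P : Measure Ω) [IsProbabilityMeasure P]
    (T J N : ℕ)
    (F : Fin N → ℕ → MeasurableSpace Ω)
    (X : Fin J → ℕ → Ω → ℝ)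
    (assets : Fin N → Finset (Fin J))
    (𝒴 : Set (Fin N → Ω → ℝ))
    (h𝒴R0 : zeroSum Ω N ⊆ 𝒴)
    (h𝒴add : ∀ y ∈ 𝒴, ∀ z ∈ 𝒴, (fun i ω => y i ω + z i ω) ∈ 𝒴)
    (hNCA : NCA P (fun i => gainsSet (F i) T (assets i) X) 𝒴)
    (f : Fin N → Ω → ℝ) :
    rhoMinus P (fun i => gainsSet (F i) T (assets i) X) 𝒴 f
      ≤ rhoPlus P (fun i => gainsSet (F i) T (assets i) X) 𝒴 f := by
  refine sSup_le ?_
  rintro _ ⟨m, rfl, k, hk, y, hy, hsub⟩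
  refine le_sInf ?_
  rintro _ ⟨m', rfl, k', hk', y', hy', hsuper⟩
  exact EReal.coe_le_coe_iff.mpr <| hNCA.sum_le_sum_of_hedges h𝒴R0 h𝒴add
    (fun _ _ hg _ hg' => sub_mem_gainsSet hg hg') hk hk' hy hy' hsub hsuper

/-- subhedging price is dominated by superhedging price (Lemma lemmarho, Item 6). -/
theorem rhoMinus_le_rhoPlus
    {Ω : Type*} [m0 : MeasurableSpace Ω]
    (P : Measure Ω) [IsProbabilityMeasure P]
    (T J N : ℕ) (hT : 1 ≤ T) (hJ : 1 ≤ J) (hN : 1 ≤ N)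
    (F : Fin N → ℕ → MeasurableSpace Ω)
    (hFmono : ∀ i, Monotone (F i))
    (hFle : ∀ i t, F i t ≤ m0)
    (hFzero : ∀ i, ∀ A : Set Ω, MeasurableSet[F i 0] A → P A = 0 ∨ P A = 1)
    (X : Fin J → ℕ → Ω → ℝ)
    (assets : Fin N → Finset (Fin J))
    (hassets : ∀ i, (assets i).Nonempty)
    (hcover : ∀ j, ∃ i, j ∈ assets i)
    (hadapted : ∀ i, ∀ j ∈ assets i, ∀ t, t ≤ T → Measurable[F i t] (X j t))
    (𝒴 : Set (Fin N → Ω → ℝ))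
    (h𝒴meas : ∀ y ∈ 𝒴, ∀ i, Measurable[F i T] (y i))
    (h𝒴R0 : zeroSum Ω N ⊆ 𝒴)
    (h𝒴add : ∀ y ∈ 𝒴, ∀ z ∈ 𝒴, (fun i ω => y i ω + z i ω) ∈ 𝒴)
    (h𝒴smul : ∀ y ∈ 𝒴, ∀ c : ℝ, (fun i ω => c * y i ω) ∈ 𝒴)
    (hNCA : NCA P (fun i => gainsSet (F i) T (assets i) X) 𝒴)
    (f : Fin N → Ω → ℝ) (hfmeas : ∀ i, Measurable[F i T] (f i)) :
    rhoMinus P (fun i => gainsSet (F i) T (assets i) X) 𝒴 f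
      ≤ rhoPlus P (fun i => gainsSet (F i) T (assets i) X) 𝒴 f :=
  rhoMinus_le_rhoPlus_general (m0 := m0) P T J N F X assets 𝒴 h𝒴R0 h𝒴add hNCA f

end CollectiveArb
end

section
/- Let 𝒴̃ ⊆ L^0(Ω,𝐅_T,P) be a vector subspace containing ℝ^N_0, let f ∈ L^0(Ω,𝐅_T,P) be not 𝒴̃-collectively replicable, and set 𝒴 := span(𝒴̃ ∪ {f}). If NCA(𝒴) holds and K^𝒴̃ is closed under componentwise P-a.s. convergence of sequences, then ρ^𝒴̃_−(f) < 0 < ρ^𝒴̃_+(f). -/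
open MeasureTheory Filter Topology

namespace CollectiveArb

variable {Ω : Type*}

lemma gains_measurable {J T : ℕ} {F : ℕ → MeasurableSpace Ω}
    {A : Finset (Fin J)} {X : Fin J → ℕ → Ω → ℝ}
    (hmono : Monotone F)
    (hadapted : ∀ j ∈ A, ∀ t, t ≤ T → Measurable[F t] (X j t))
    {k : Ω → ℝ} (hk : k ∈ gainsSet F T A X) :
    Measurable[F T] k := by
  obtain ⟨H, hH, rfl⟩ := hk
  refine Finset.measurable_sum _ fun j hj => Finset.measurable_sum _ fun s hs => ?_
  simp only [Finset.mem_Icc] at hs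
  have hle : s - 1 ≤ T := Nat.le_trans (Nat.sub_le s 1) hs.2
  have h1 : Measurable[F T] (H j s) :=
    (hH j hj s hs.1 hs.2).mono (hmono hle) le_rfl
  have h2 : Measurable[F T] (X j s) :=
    (hadapted j hj s hs.2).mono (hmono hs.2) le_rfl
  have h3 : Measurable[F T] (X j (s - 1)) :=
    (hadapted j hj (s - 1) hle).mono (hmono hle) le_rfl
  exact h1.mul (h2.sub h3)

lemma gains_smul {J T : ℕ} {F : ℕ → MeasurableSpace Ω}
    {A : Finset (Fin J)} {X : Fin J → ℕ → Ω → ℝ}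
    {k : Ω → ℝ} (hk : k ∈ gainsSet F T A X) (c : ℝ) :
    (fun ω => c * k ω) ∈ gainsSet F T A X := by
  obtain ⟨H, hH, rfl⟩ := hk
  refine ⟨fun j s ω => c * H j s ω,
    fun j hj s hs1 hs2 => (hH j hj s hs1 hs2).const_mul c, ?_⟩
  funext ω
  simp only [Finset.mul_sum, mul_assoc]

lemma tendsto_aux (N : ℕ) (hN : 1 ≤ N) :
    Tendsto (fun n : ℕ => (1 : ℝ) / (((n : ℝ) + 1) * (N : ℝ))) atTop (𝓝 0) := by
  have h2 := tendsto_one_div_add_atTop_nhds_zero_nat.mul_const ((1 : ℝ) / (N : ℝ))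
  rw [zero_mul] at h2
  exact h2.congr fun n => one_div_mul_one_div _ _

/-- strict sub/superhedging price gap for non-replicable claims (Lemma interval). -/
theorem rho_interval_of_not_replicable
    {Ω : Type*} [m0 : MeasurableSpace Ω]
    (P : Measure Ω) [IsProbabilityMeasure P]
    (T J N : ℕ) (hT : 1 ≤ T) (hJ : 1 ≤ J) (hN : 1 ≤ N)
    (F : Fin N → ℕ → MeasurableSpace Ω)
    (hFmono : ∀ i, Monotone (F i))
    (hFle : ∀ i t, F i t ≤ m0)
    (hFzero : ∀ i, ∀ A : Set Ω, MeasurableSet[F i 0] A → P A = 0 ∨ P A = 1)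
    (X : Fin J → ℕ → Ω → ℝ)
    (assets : Fin N → Finset (Fin J))
    (hassets : ∀ i, (assets i).Nonempty)
    (hcover : ∀ j, ∃ i, j ∈ assets i)
    (hadapted : ∀ i, ∀ j ∈ assets i, ∀ t, t ≤ T → Measurable[F i t] (X j t))
    (𝒴t : Set (Fin N → Ω → ℝ))
    (h𝒴tmeas : ∀ y ∈ 𝒴t, ∀ i, Measurable[F i T] (y i))
    (h𝒴tR0 : zeroSum Ω N ⊆ 𝒴t)
    (h𝒴tadd : ∀ y ∈ 𝒴t, ∀ z ∈ 𝒴t, (fun i ω => y i ω + z i ω) ∈ 𝒴t)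
    (h𝒴tsmul : ∀ y ∈ 𝒴t, ∀ c : ℝ, (fun i ω => c * y i ω) ∈ 𝒴t)
    (f : Fin N → Ω → ℝ) (hfmeas : ∀ i, Measurable[F i T] (f i))
    (hfnotrep : ¬ Replicable P (fun i => gainsSet (F i) T (assets i) X) 𝒴t f)
    (hNCA : NCA P (fun i => gainsSet (F i) T (assets i) X) (spanWith 𝒴t f))
    (hclosed : ClosedAS P (fun i => F i T)
      (KY P (fun i => F i T) (fun i => gainsSet (F i) T (assets i) X) 𝒴t)) :
    rhoMinus P (fun i => gainsSet (F i) T (assets i) X) 𝒴t f < (0 : EReal) ∧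
    (0 : EReal) < rhoPlus P (fun i => gainsSet (F i) T (assets i) X) 𝒴t f := by
  set K : Fin N → Set (Ω → ℝ) := fun i => gainsSet (F i) T (assets i) X with hKdef
  have hNpos : (0 : ℝ) < (N : ℝ) := by exact_mod_cast hN
  have hNne : (N : ℝ) ≠ 0 := ne_of_gt hNpos
  constructor
  · -- rhoMinus < 0
    by_contra hcon
    push_neg at hcon
    -- hcon : 0 ≤ rhoMinus
    have hwit : ∀ n : ℕ, ∃ k y : Fin N → Ω → ℝ, (∀ i, k i ∈ K i) ∧ y ∈ 𝒴t ∧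
        ∀ i, ∀ᵐ ω ∂P,
          -((1 : ℝ) / (((n : ℝ) + 1) * N)) + k i ω - y i ω ≤ f i ω := by
      intro n
      have hn1 : (0 : ℝ) < (n : ℝ) + 1 := by positivity
      have hlt : ((-((1 : ℝ) / ((n : ℝ) + 1)) : ℝ) : EReal)
          < rhoMinus P K 𝒴t f := by
        refine lt_of_lt_of_le ?_ hcon
        have : -((1 : ℝ) / ((n : ℝ) + 1)) < 0 := by
          rw [neg_lt_zero]; positivity
        exact_mod_cast this
      unfold rhoMinus at hlt
      rw [lt_sSup_iff] at hlt
      obtain ⟨z, hz, hzlt⟩ := hlt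
      obtain ⟨m, rfl, k, hk, y, hy, hsh⟩ := hz
      have hs : -((1 : ℝ) / ((n : ℝ) + 1)) < ∑ i, m i := by exact_mod_cast hzlt
      set c : ℝ := (1 : ℝ) / (((n : ℝ) + 1) * N) with hc
      set δ : ℝ := (∑ i, m i) + (1 : ℝ) / ((n : ℝ) + 1) with hδdef
      have hδ : 0 < δ := by
        simp only [hδdef]; linarith
      set x : Fin N → ℝ := fun i => -c - m i + δ / N with hx
      have hx0 : ∑ i, x i = 0 := by
        simp only [hx, hc, hδdef, Finset.sum_add_distrib, Finset.sum_sub_distrib,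
          Finset.sum_neg_distrib, Finset.sum_const, Finset.card_univ,
          Fintype.card_fin, nsmul_eq_mul]
        field_simp
        ring
      refine ⟨k, fun i ω => y i ω + x i, hk,
        h𝒴tadd y hy _ (h𝒴tR0 ⟨x, hx0, fun i => rfl⟩), fun i => ?_⟩
      filter_upwards [hsh i] with ω hω
      have hxval : x i = -c - m i + δ / N := rfl
      have hdpos : 0 ≤ δ / N := div_nonneg hδ.le hNpos.le
      -- goal : -c + k i ω - (y i ω + x i) ≤ f i ω
      have : -c - x i ≤ m i := by rw [hxval]; linarith
      linarith
    choose kk yy hkk hyy hsh using hwit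
    -- apply closedness to the sequence  n ↦ (-(1/((n+1)N)) - f i ·)
    have hmem : ∀ n : ℕ, (fun i ω => -((1 : ℝ) / (((n : ℝ) + 1) * N)) - f i ω)
        ∈ KY P (fun i => F i T) K 𝒴t := by
      intro n
      refine ⟨fun i ω => (-1 : ℝ) * kk n i ω,
        fun i ω => f i ω + (1 : ℝ) / (((n : ℝ) + 1) * N) - kk n i ω + yy n i ω,
        yy n, hyy n, fun i => gains_smul (hkk n i) (-1), fun i => ⟨?_, ?_⟩,
        fun i => ?_⟩
      · have hkm : Measurable[F i T] (kk n i) :=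
          gains_measurable (hFmono i) (hadapted i) (hkk n i)
        have hym : Measurable[F i T] (yy n i) := h𝒴tmeas (yy n) (hyy n) i
        exact (((hfmeas i).add_const _).sub hkm).add hym
      · filter_upwards [hsh n i] with ω hω
        linarith
      · funext ω; ring
    have hgKY : (fun i ω => -f i ω) ∈ KY P (fun i => F i T) K 𝒴t := by
      refine hclosed _ _ hmem (fun i => (hfmeas i).neg) fun i => ?_
      refine Eventually.of_forall fun ω => ?_
      have h0 := (tendsto_aux N hN).neg.sub_const (f i ω)
      simpa using h0
    obtain ⟨ks, ls, ys, hys, hks, hls, heq⟩ := hgKY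
    have hpos : ∀ i, ∀ᵐ ω ∂P,
        0 ≤ ks i ω + (ys i ω + (1 : ℝ) * f i ω) := by
      intro i
      filter_upwards [(hls i).2] with ω hω
      have hfe : -f i ω = ks i ω - ls i ω + ys i ω := congrFun (heq i) ω
      linarith
    have hzero := hNCA ks (fun i ω => ys i ω + (1 : ℝ) * f i ω)
      ⟨ys, hys, 1, fun i => rfl⟩ hks hpos
    apply hfnotrep
    refine ⟨fun _ => 0, fun i ω => (-1 : ℝ) * ks i ω, fun i ω => (-1 : ℝ) * ys i ω,
      h𝒴tsmul ys hys (-1), fun i => gains_smul (hks i) (-1), fun i => ?_⟩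
    filter_upwards [hzero i] with ω hω
    have hω' : ks i ω + (ys i ω + (1 : ℝ) * f i ω) = 0 := hω
    show f i ω = 0 + (-1 : ℝ) * ks i ω + (-1 : ℝ) * ys i ω
    linarith
  · -- 0 < rhoPlus
    by_contra hcon
    push_neg at hcon
    -- hcon : rhoPlus ≤ 0
    have hwit : ∀ n : ℕ, ∃ k y : Fin N → Ω → ℝ, (∀ i, k i ∈ K i) ∧ y ∈ 𝒴t ∧
        ∀ i, ∀ᵐ ω ∂P,
          f i ω ≤ (1 : ℝ) / (((n : ℝ) + 1) * N) + k i ω + y i ω := by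
      intro n
      have hn1 : (0 : ℝ) < (n : ℝ) + 1 := by positivity
      have hlt : rhoPlus P K 𝒴t f
          < (((1 : ℝ) / ((n : ℝ) + 1) : ℝ) : EReal) := by
        refine lt_of_le_of_lt hcon ?_
        have : (0 : ℝ) < (1 : ℝ) / ((n : ℝ) + 1) := by positivity
        exact_mod_cast this
      unfold rhoPlus at hlt
      rw [sInf_lt_iff] at hlt
      obtain ⟨z, hz, hzlt⟩ := hlt
      obtain ⟨m, rfl, k, hk, y, hy, hsh⟩ := hz
      have hs : (∑ i, m i) < (1 : ℝ) / ((n : ℝ) + 1) := by exact_mod_cast hzlt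
      set c : ℝ := (1 : ℝ) / (((n : ℝ) + 1) * N) with hc
      set δ : ℝ := (1 : ℝ) / ((n : ℝ) + 1) - ∑ i, m i with hδdef
      have hδ : 0 < δ := by simp only [hδdef]; linarith
      set x : Fin N → ℝ := fun i => m i - c + δ / N with hx
      have hx0 : ∑ i, x i = 0 := by
        simp only [hx, hc, hδdef, Finset.sum_add_distrib, Finset.sum_sub_distrib,
          Finset.sum_const, Finset.card_univ, Fintype.card_fin, nsmul_eq_mul]
        field_simp
        ring
      refine ⟨k, fun i ω => y i ω + x i, hk,
        h𝒴tadd y hy _ (h𝒴tR0 ⟨x, hx0, fun i => rfl⟩), fun i => ?_⟩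
      filter_upwards [hsh i] with ω hω
      have hxval : x i = m i - c + δ / N := rfl
      have hdpos : 0 ≤ δ / N := div_nonneg hδ.le hNpos.le
      have : m i ≤ c + x i := by rw [hxval]; linarith
      linarith
    choose kk yy hkk hyy hsh using hwit
    have hmem : ∀ n : ℕ, (fun i ω => f i ω - (1 : ℝ) / (((n : ℝ) + 1) * N))
        ∈ KY P (fun i => F i T) K 𝒴t := by
      intro n
      refine ⟨kk n,
        fun i ω => (1 : ℝ) / (((n : ℝ) + 1) * N) + kk n i ω + yy n i ω - f i ω,
        yy n, hyy n, hkk n, fun i => ⟨?_, ?_⟩, fun i => ?_⟩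
      · have hkm : Measurable[F i T] (kk n i) :=
          gains_measurable (hFmono i) (hadapted i) (hkk n i)
        have hym : Measurable[F i T] (yy n i) := h𝒴tmeas (yy n) (hyy n) i
        exact ((hkm.const_add _).add hym).sub (hfmeas i)
      · filter_upwards [hsh n i] with ω hω
        linarith
      · funext ω; ring
    have hgKY : f ∈ KY P (fun i => F i T) K 𝒴t := by
      refine hclosed _ _ hmem hfmeas fun i => ?_
      refine Eventually.of_forall fun ω => ?_
      have h0 := Tendsto.const_sub (f i ω) (tendsto_aux N hN)
      simpa using h0
    obtain ⟨ks, ls, ys, hys, hks, hls, heq⟩ := hgKY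
    have hpos : ∀ i, ∀ᵐ ω ∂P,
        0 ≤ ks i ω + (ys i ω + (-1 : ℝ) * f i ω) := by
      intro i
      filter_upwards [(hls i).2] with ω hω
      have hfe : f i ω = ks i ω - ls i ω + ys i ω := congrFun (heq i) ω
      linarith
    have hzero := hNCA ks (fun i ω => ys i ω + (-1 : ℝ) * f i ω)
      ⟨ys, hys, -1, fun i => rfl⟩ hks hpos
    apply hfnotrep
    refine ⟨fun _ => 0, ks, ys, hys, hks, fun i => ?_⟩
    filter_upwards [hzero i] with ω hω
    have hω' : ks i ω + (ys i ω + (-1 : ℝ) * f i ω) = 0 := hω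
    show f i ω = 0 + ks i ω + ys i ω
    linarith

end CollectiveArb
end

section
/- Suppose 𝒴 = span(ℝ^N_0, Y_1,…,Y_R) is a finite-dimensional vector subspace of L^0(Ω,𝐅_T,P) with ℝ^N_0 ⊆ 𝒴, and NCA(𝒴) holds. Let f ∈ L^0(Ω,𝐅_T,P) and let φ ∈ L^0(Ω,𝐅_T,P) satisfy max{|f^i|, |Y^i_1|, …, |Y^i_R|} ≤ φ^i P-a.s. for every i. If ρ^𝒴_+(f) is attained and there exists Q ∈ ℳ^φ_e(𝒴) with ρ^𝒴_+(f) = Σ_{i=1}^N E_{Q^i}[f^i], then f is 𝒴-collectively replicable. The analogous statement holds with ρ^𝒴_− in place of ρ^𝒴_+. -/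
/-!
Let `m + k + y ≥ f` be an optimal superhedge and `Q ∈ ℳ^φ_e(𝒴)` a dual optimizer. Under
`Qⁱ` the gain `kⁱ` is a martingale transform bounded below by the integrable
`φⁱ + |mⁱ| + |yⁱ|`, hence integrable with mean zero; `𝒴` is symmetric, so
`∑ᵢ E_{Qⁱ}[yⁱ] = 0`. The slack `m + k + y - f` is therefore nonnegative with
`∑ᵢ E_{Qⁱ}[slackⁱ] = ∑ᵢ mⁱ - ∑ᵢ E_{Qⁱ}[fⁱ] = 0`, so it vanishes `Qⁱ`-a.s., hence `P`-a.s.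

For a martingale transform `V_t = (H · X)_t` the identity `E[V_{t+1}; C] = E[V_t; C]` holds
on the `ℱ_t`-sets `C` where `V_t` and `H_{t+1}` are bounded. Splitting into positive and
negative parts and letting the bound grow gives
`E[V_{t+1}⁺; C] + E[V_t⁻; C] = E[V_t⁺; C] + E[V_{t+1}⁻; C]` for every `C ∈ ℱ_t`, with no
integrability assumption. Taking `C = {V_t ≤ 0}` yields `E[V_t⁻] ≤ E[V_{t+1}⁻]`, so by backward
induction from `V_T ≥ -h` all negative parts are integrable; taking `C = Ω`, forward induction
then shows that each `V_t` is integrable with mean zero.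
-/

open MeasureTheory Filter Topology

namespace CollectiveArb

variable {Ω : Type*}

open scoped ENNReal

section PosNegParts

variable {α : Type*} {m0 : MeasurableSpace α} {μ : Measure α}

lemma _root_.MeasureTheory.Integrable.lintegral_ofReal_ne_top {f : α → ℝ}
    (hf : Integrable f μ) :
    ∫⁻ a, .ofReal (f a) ∂μ ≠ ∞ :=
  ((lintegral_ofReal_le_lintegral_enorm _).trans_lt hf.2).ne

lemma lintegral_ofReal_add_lintegral_ofReal_neg_eq {f g : α → ℝ} (hf : Integrable f μ)
    (hg : Integrable g μ) (h : ∫ a, f a ∂μ = ∫ a, g a ∂μ) :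
    ∫⁻ a, .ofReal (f a) ∂μ + ∫⁻ a, .ofReal (-g a) ∂μ
      = ∫⁻ a, .ofReal (g a) ∂μ + ∫⁻ a, .ofReal (-f a) ∂μ := by
  rw [integral_eq_lintegral_pos_part_sub_lintegral_neg_part hf,
    integral_eq_lintegral_pos_part_sub_lintegral_neg_part hg] at h
  have hg' : ∫⁻ a, .ofReal (-g a) ∂μ ≠ ∞ := hg.neg.lintegral_ofReal_ne_top
  have hf' : ∫⁻ a, .ofReal (-f a) ∂μ ≠ ∞ := hf.neg.lintegral_ofReal_ne_top
  refine (ENNReal.toReal_eq_toReal_iff'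
    (ENNReal.add_ne_top.2 ⟨hf.lintegral_ofReal_ne_top, hg'⟩)
    (ENNReal.add_ne_top.2 ⟨hg.lintegral_ofReal_ne_top, hf'⟩)).1 ?_
  rw [ENNReal.toReal_add hf.lintegral_ofReal_ne_top hg',
    ENNReal.toReal_add hg.lintegral_ofReal_ne_top hf']
  linarith

lemma integrable_of_lintegral_ofReal_ne_top {f : α → ℝ} (hfm : AEStronglyMeasurable f μ)
    (hpos : ∫⁻ a, .ofReal (f a) ∂μ ≠ ∞) (hneg : ∫⁻ a, .ofReal (-f a) ∂μ ≠ ∞) :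
    Integrable f μ := by
  refine ⟨hfm, ?_⟩
  have hsplit : ∀ a, ‖f a‖ₑ = .ofReal (f a) + .ofReal (-f a) := fun a => by
    rw [Real.enorm_eq_ofReal_abs]
    rcases le_total (f a) 0 with h | h
    · rw [abs_of_nonpos h, ENNReal.ofReal_of_nonpos h, zero_add]
    · rw [abs_of_nonneg h, ENNReal.ofReal_of_nonpos (neg_nonpos.2 h), add_zero]
  rw [HasFiniteIntegral, lintegral_congr hsplit,
    lintegral_add_left' hfm.aemeasurable.ennreal_ofReal]
  exact ENNReal.add_lt_top.2 ⟨hpos.lt_top, hneg.lt_top⟩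

end PosNegParts

section Trading

variable {ι : Type*}

def afterTrade (A : Finset ι) (Z : Ω → ℝ) (U D : ι → Ω → ℝ) (ω : Ω) : ℝ :=
  Z ω + ∑ j ∈ A, U j ω * D j ω

def truncation (A : Finset ι) (Z : Ω → ℝ) (U : ι → Ω → ℝ) (n : ℕ) : Set Ω :=
  {ω | |Z ω| ≤ n ∧ ∀ j ∈ A, |U j ω| ≤ n}

lemma monotone_truncation (A : Finset ι) (Z : Ω → ℝ) (U : ι → Ω → ℝ) :
    Monotone (truncation A Z U) := fun _ _ hnk _ hω =>
  ⟨hω.1.trans (Nat.cast_le.2 hnk), fun j hj => (hω.2 j hj).trans (Nat.cast_le.2 hnk)⟩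

lemma iUnion_truncation (A : Finset ι) (Z : Ω → ℝ) (U : ι → Ω → ℝ) :
    ⋃ n, truncation A Z U n = Set.univ := by
  refine Set.eq_univ_of_forall fun ω => Set.mem_iUnion.2 ?_
  obtain ⟨n, hn⟩ := exists_nat_ge (|Z ω| + ∑ j ∈ A, |U j ω|)
  have hsum : 0 ≤ ∑ j ∈ A, |U j ω| := Finset.sum_nonneg fun j _ => abs_nonneg _
  refine ⟨n, by linarith, fun j hj => ?_⟩
  have := Finset.single_le_sum (f := fun j => |U j ω|) (fun j _ => abs_nonneg _) hj
  linarith [abs_nonneg (Z ω)]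

lemma measurableSet_truncation {m : MeasurableSpace Ω} {A : Finset ι} {Z : Ω → ℝ}
    {U : ι → Ω → ℝ} (hZ : Measurable[m] Z) (hU : ∀ j ∈ A, Measurable[m] (U j)) (n : ℕ) :
    MeasurableSet[m] (truncation A Z U n) := by
  have hset : truncation A Z U n = {ω | |Z ω| ≤ n} ∩ ⋂ j ∈ A, {ω | |U j ω| ≤ n} := by
    ext ω
    simp [truncation]
  rw [hset]
  exact (measurableSet_le hZ.abs measurable_const).inter <|
    .biInter A.countable_toSet fun j hj => measurableSet_le (hU j hj).abs measurable_const

lemma setLIntegral_eq_iSup_truncation {m0 : MeasurableSpace Ω} {Q : Measure Ω}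
    (A : Finset ι) (Z : Ω → ℝ) (U : ι → Ω → ℝ) (f : Ω → ℝ≥0∞) (C : Set Ω) :
    ∫⁻ ω in C, f ω ∂Q = ⨆ n, ∫⁻ ω in C ∩ truncation A Z U n, f ω ∂Q := by
  conv_lhs => rw [← Set.inter_univ C, ← iUnion_truncation A Z U, Set.inter_iUnion]
  exact setLIntegral_iUnion_of_directed f
    (Monotone.directed_le fun _ _ hnk => Set.inter_subset_inter_right C
      (monotone_truncation A Z U hnk))

structure TradingStep (m : MeasurableSpace Ω) {m0 : MeasurableSpace Ω} (Q : Measure Ω)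
    (A : Finset ι) (Z : Ω → ℝ) (U D : ι → Ω → ℝ) : Prop where
  le : m ≤ m0
  measurable_wealth : Measurable[m] Z
  measurable_position : ∀ j ∈ A, Measurable[m] (U j)
  integrable_increment : ∀ j ∈ A, Integrable (D j) Q
  condExp_increment : ∀ j ∈ A, Q[D j | m] =ᵐ[Q] 0

lemma setIntegral_mul_eq_zero_of_condExp_eq_zero {m m0 : MeasurableSpace Ω} {Q : Measure Ω}
    [IsFiniteMeasure Q] (hm : m ≤ m0) {S : Set Ω} (hS : MeasurableSet[m] S) {g d : Ω → ℝ}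
    (hg : Measurable[m] g) {a : ℝ} (hga : ∀ ω ∈ S, |g ω| ≤ a) (hd : Integrable d Q)
    (hd0 : Q[d | m] =ᵐ[Q] 0) :
    ∫ ω in S, g ω * d ω ∂Q = 0 := by
  have hgS : StronglyMeasurable[m] (S.indicator g) := (hg.indicator hS).stronglyMeasurable
  have hbound : ∀ ω, ‖S.indicator g ω‖ ≤ |a| := fun ω => by
    by_cases hω : ω ∈ S
    · simpa [hω] using (hga ω hω).trans (le_abs_self a)
    · simp [hω]
  have hint : Integrable (S.indicator g * d) Q :=
    hd.bdd_mul (hgS.mono hm).aestronglyMeasurable (ae_of_all _ hbound)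
  calc ∫ ω in S, g ω * d ω ∂Q = ∫ ω, (S.indicator g * d) ω ∂Q := by
        rw [← integral_indicator (hm _ hS)]
        congr 1
        funext ω
        by_cases hω : ω ∈ S <;> simp [hω]
    _ = ∫ ω, Q[S.indicator g * d | m] ω ∂Q := (integral_condExp hm).symm
    _ = ∫ ω, (S.indicator g * Q[d | m]) ω ∂Q :=
        integral_congr_ae (condExp_mul_of_stronglyMeasurable_left hgS hint hd)
    _ = 0 := by
        rw [integral_congr_ae (hd0.mono fun ω hω => show _ = (0 : ℝ) by simp [hω])]
        simp

namespace TradingStep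

variable {m m0 : MeasurableSpace Ω} {Q : Measure Ω} {A : Finset ι} {Z : Ω → ℝ}
  {U D : ι → Ω → ℝ}

lemma aestronglyMeasurable_afterTrade (h : TradingStep m Q A Z U D) :
    AEStronglyMeasurable (afterTrade A Z U D) Q :=
  (h.measurable_wealth.mono h.le le_rfl).aestronglyMeasurable.add <|
    Finset.aestronglyMeasurable_fun_sum A fun j hj =>
      ((h.measurable_position j hj).mono h.le le_rfl).aestronglyMeasurable.mul
        (h.integrable_increment j hj).aestronglyMeasurable

variable [IsFiniteMeasure Q]

lemma integrableOn_and_setIntegral_eq (h : TradingStep m Q A Z U D) {S : Set Ω}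
    (hS : MeasurableSet[m] S) {n : ℕ} (hSn : S ⊆ truncation A Z U n) :
    IntegrableOn Z S Q ∧ IntegrableOn (afterTrade A Z U D) S Q ∧
      ∫ ω in S, afterTrade A Z U D ω ∂Q = ∫ ω in S, Z ω ∂Q := by
  have hS0 : MeasurableSet[m0] S := h.le _ hS
  have hZ : IntegrableOn Z S Q :=
    Measure.integrableOn_of_bounded (measure_ne_top _ _)
      (h.measurable_wealth.mono h.le le_rfl).aestronglyMeasurable (M := n)
      (ae_restrict_of_forall_mem hS0 fun ω hω => (hSn hω).1)
  have hterm : ∀ j ∈ A, IntegrableOn (fun ω => U j ω * D j ω) S Q := fun j hj =>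
    (h.integrable_increment j hj).integrableOn.bdd_mul
      ((h.measurable_position j hj).mono h.le le_rfl).aestronglyMeasurable (c := n)
      (ae_restrict_of_forall_mem hS0 fun ω hω => (hSn hω).2 j hj)
  have hzero : ∀ j ∈ A, ∫ ω in S, U j ω * D j ω ∂Q = 0 := fun j hj =>
    setIntegral_mul_eq_zero_of_condExp_eq_zero h.le hS (h.measurable_position j hj)
      (fun ω hω => (hSn hω).2 j hj) (h.integrable_increment j hj) (h.condExp_increment j hj)
  have hsum : IntegrableOn (fun ω => ∑ j ∈ A, U j ω * D j ω) S Q :=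
    integrable_finsetSum A hterm
  refine ⟨hZ, hZ.add hsum, ?_⟩
  simp only [afterTrade]
  rw [integral_add hZ hsum, integral_finsetSum A hterm, Finset.sum_eq_zero hzero,
    add_zero]

lemma setLIntegral_balance (h : TradingStep m Q A Z U D) {C : Set Ω}
    (hC : MeasurableSet[m] C) :
    ∫⁻ ω in C, .ofReal (afterTrade A Z U D ω) ∂Q + ∫⁻ ω in C, .ofReal (-Z ω) ∂Q
      = ∫⁻ ω in C, .ofReal (Z ω) ∂Q + ∫⁻ ω in C, .ofReal (-afterTrade A Z U D ω) ∂Q := by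
  have htrunc : ∀ n, _ := fun n => by
    obtain ⟨hZ, hW, heq⟩ := h.integrableOn_and_setIntegral_eq
      (hC.inter (measurableSet_truncation h.measurable_wealth h.measurable_position n))
      Set.inter_subset_right
    exact lintegral_ofReal_add_lintegral_ofReal_neg_eq hW hZ heq
  have hmono (f : Ω → ℝ≥0∞) : Monotone fun n => ∫⁻ ω in C ∩ truncation A Z U n, f ω ∂Q :=
    fun _ _ hnk => lintegral_mono_set
      (Set.inter_subset_inter_right C (monotone_truncation A Z U hnk))
  have hsup := setLIntegral_eq_iSup_truncation (Q := Q) A Z U (C := C)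
  rw [hsup, hsup, hsup, hsup, ENNReal.iSup_add_iSup_of_monotone (hmono _) (hmono _),
    ENNReal.iSup_add_iSup_of_monotone (hmono _) (hmono _)]
  exact iSup_congr htrunc

lemma lintegral_ofReal_neg_le (h : TradingStep m Q A Z U D) :
    ∫⁻ ω, .ofReal (-Z ω) ∂Q ≤ ∫⁻ ω, .ofReal (-afterTrade A Z U D ω) ∂Q := by
  set C := {ω | Z ω ≤ 0}
  have hC : MeasurableSet[m] C := measurableSet_le h.measurable_wealth measurable_const
  have hsupp : Function.support (fun ω => ENNReal.ofReal (-Z ω)) ⊆ C := fun ω hω => by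
    by_contra hpos
    simp only [C, Set.mem_ofPred_eq, not_le] at hpos
    exact hω (ENNReal.ofReal_of_nonpos (by linarith))
  have hpos : ∫⁻ ω in C, .ofReal (Z ω) ∂Q = 0 :=
    setLIntegral_eq_zero (h.le _ hC) fun ω hω => ENNReal.ofReal_of_nonpos hω
  have hbal := h.setLIntegral_balance hC
  rw [hpos, zero_add] at hbal
  calc ∫⁻ ω, .ofReal (-Z ω) ∂Q = ∫⁻ ω in C, .ofReal (-Z ω) ∂Q :=
        (setLIntegral_eq_of_support_subset hsupp).symm
    _ ≤ ∫⁻ ω in C, .ofReal (afterTrade A Z U D ω) ∂Q + ∫⁻ ω in C, .ofReal (-Z ω) ∂Q :=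
        le_add_self
    _ = ∫⁻ ω in C, .ofReal (-afterTrade A Z U D ω) ∂Q := hbal
    _ ≤ ∫⁻ ω, .ofReal (-afterTrade A Z U D ω) ∂Q := setLIntegral_le_lintegral _ _

lemma integrable_and_integral_eq (h : TradingStep m Q A Z U D) (hZ : Integrable Z Q)
    (hW : ∫⁻ ω, .ofReal (-afterTrade A Z U D ω) ∂Q ≠ ∞) :
    Integrable (afterTrade A Z U D) Q ∧ ∫ ω, afterTrade A Z U D ω ∂Q = ∫ ω, Z ω ∂Q := by
  have hbal := h.setLIntegral_balance MeasurableSet.univ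
  simp only [Measure.restrict_univ] at hbal
  have hZ' : ∫⁻ ω, .ofReal (-Z ω) ∂Q ≠ ∞ := hZ.neg.lintegral_ofReal_ne_top
  have hWpos : ∫⁻ ω, .ofReal (afterTrade A Z U D ω) ∂Q ≠ ∞ :=
    ne_top_of_le_ne_top (ENNReal.add_ne_top.2 ⟨hZ.lintegral_ofReal_ne_top, hW⟩)
      (hbal ▸ le_self_add)
  have hWint :=
    integrable_of_lintegral_ofReal_ne_top h.aestronglyMeasurable_afterTrade hWpos hW
  refine ⟨hWint, ?_⟩
  have hreal := congrArg ENNReal.toReal hbal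
  rw [ENNReal.toReal_add hWpos hZ', ENNReal.toReal_add hZ.lintegral_ofReal_ne_top hW] at hreal
  rw [integral_eq_lintegral_pos_part_sub_lintegral_neg_part hWint,
    integral_eq_lintegral_pos_part_sub_lintegral_neg_part hZ]
  linarith

end TradingStep

end Trading

section Gain

variable {ι : Type*}

lemma condExp_sub_eq_zero_of_eq_condExp {m m0 : MeasurableSpace Ω} {Q : Measure Ω}
    [IsFiniteMeasure Q] (hm : m ≤ m0) {a b : Ω → ℝ} (ha : Measurable[m] a)
    (hai : Integrable a Q) (hbi : Integrable b Q) (hab : a =ᵐ[Q] Q[b | m]) :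
    Q[b - a | m] =ᵐ[Q] 0 := by
  have hsub := condExp_sub hbi hai m
  rw [condExp_of_stronglyMeasurable hm ha.stronglyMeasurable hai] at hsub
  filter_upwards [hsub, hab] with ω h1 h2
  simp [h1, h2]

/-- The gain `(H · X)_t` of the strategy `H`. -/
def gain (A : Finset ι) (H X : ι → ℕ → Ω → ℝ) (t : ℕ) (ω : Ω) : ℝ :=
  ∑ j ∈ A, ∑ s ∈ Finset.Icc 1 t, H j s ω * (X j s ω - X j (s - 1) ω)

variable {A : Finset ι} {H X : ι → ℕ → Ω → ℝ}

lemma gain_zero : gain A H X 0 = 0 := by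
  funext ω
  simp [gain]

lemma gain_succ (t : ℕ) : gain A H X (t + 1)
    = afterTrade A (gain A H X t) (fun j => H j (t + 1)) (fun j => X j (t + 1) - X j t) := by
  funext ω
  simp only [gain, afterTrade, Pi.sub_apply, ← Finset.sum_add_distrib]
  refine Finset.sum_congr rfl fun j _ => ?_
  rw [Finset.sum_Icc_succ_top (by omega : 1 ≤ t + 1), Nat.add_sub_cancel]

variable {m0 : MeasurableSpace Ω} {F : ℕ → MeasurableSpace Ω} {T : ℕ}

lemma measurable_gain (hF : Monotone F)
    (hH : ∀ j ∈ A, ∀ s, 1 ≤ s → s ≤ T → Measurable[F (s - 1)] (H j s))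
    (hX : ∀ j ∈ A, ∀ t, t ≤ T → Measurable[F t] (X j t)) {t : ℕ} (ht : t ≤ T) :
    Measurable[F t] (gain A H X t) :=
  Finset.measurable_fun_sum A fun j hj => Finset.measurable_fun_sum _ fun s hs => by
    obtain ⟨hs1, hst⟩ := Finset.mem_Icc.1 hs
    exact ((hH j hj s hs1 (hst.trans ht)).mono (hF (by omega)) le_rfl).mul
      (((hX j hj s (hst.trans ht)).mono (hF hst) le_rfl).sub
        ((hX j hj (s - 1) (by omega)).mono (hF (by omega)) le_rfl))

variable {Q : Measure Ω} [IsFiniteMeasure Q]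

lemma tradingStep_gain (hF : Monotone F) (hFle : ∀ t, F t ≤ m0)
    (hH : ∀ j ∈ A, ∀ s, 1 ≤ s → s ≤ T → Measurable[F (s - 1)] (H j s))
    (hX : ∀ j ∈ A, ∀ t, t ≤ T → Measurable[F t] (X j t))
    (hXint : ∀ j ∈ A, ∀ t, t ≤ T → Integrable (X j t) Q)
    (hmart : ∀ j ∈ A, ∀ t, t + 1 ≤ T → X j t =ᵐ[Q] Q[X j (t + 1) | F t])
    {t : ℕ} (ht : t + 1 ≤ T) :
    TradingStep (F t) Q A (gain A H X t) (fun j => H j (t + 1))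
      (fun j => X j (t + 1) - X j t) where
  le := hFle t
  measurable_wealth := measurable_gain hF hH hX (by omega)
  measurable_position j hj := hH j hj (t + 1) (by omega) ht
  integrable_increment j hj := (hXint j hj (t + 1) ht).sub (hXint j hj t (by omega))
  condExp_increment j hj := condExp_sub_eq_zero_of_eq_condExp (hFle t)
    (hX j hj t (by omega)) (hXint j hj t (by omega)) (hXint j hj (t + 1) ht)
    (hmart j hj t ht)

theorem integrable_gain_and_integral_eq_zero (hF : Monotone F) (hFle : ∀ t, F t ≤ m0)
    (hH : ∀ j ∈ A, ∀ s, 1 ≤ s → s ≤ T → Measurable[F (s - 1)] (H j s))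
    (hX : ∀ j ∈ A, ∀ t, t ≤ T → Measurable[F t] (X j t))
    (hXint : ∀ j ∈ A, ∀ t, t ≤ T → Integrable (X j t) Q)
    (hmart : ∀ j ∈ A, ∀ t, t + 1 ≤ T → X j t =ᵐ[Q] Q[X j (t + 1) | F t])
    {h : Ω → ℝ} (hh : Integrable h Q) (hbd : ∀ᵐ ω ∂Q, -h ω ≤ gain A H X T ω) :
    Integrable (gain A H X T) Q ∧ ∫ ω, gain A H X T ω ∂Q = 0 := by
  have hstep {t} (ht : t + 1 ≤ T) := tradingStep_gain hF hFle hH hX hXint hmart ht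
  have hneg : ∀ t, t ≤ T → ∫⁻ ω, .ofReal (-gain A H X t ω) ∂Q ≠ ∞ := by
    refine fun t => Nat.decreasingInduction (fun t ht ih => ?_) ?_
    · rw [gain_succ] at ih
      exact ne_top_of_le_ne_top ih (hstep ht).lintegral_ofReal_neg_le
    · refine ne_top_of_le_ne_top hh.lintegral_ofReal_ne_top (lintegral_mono_ae ?_)
      filter_upwards [hbd] with ω hω
      exact ENNReal.ofReal_le_ofReal (by linarith)
  have hfwd : ∀ t, t ≤ T → Integrable (gain A H X t) Q ∧ ∫ ω, gain A H X t ω ∂Q = 0 := by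
    intro t
    induction t with
    | zero => simp [gain_zero]
    | succ t ih =>
      intro ht
      obtain ⟨hint, hzero⟩ := ih (by omega)
      have hnext := hneg (t + 1) ht
      rw [gain_succ] at hnext ⊢
      obtain ⟨hint', heq⟩ := (hstep ht).integrable_and_integral_eq hint hnext
      exact ⟨hint', heq.trans hzero⟩
  exact hfwd T le_rfl

end Gain

section Replication

lemma neg_mem_gainsSet {J : ℕ} {F : ℕ → MeasurableSpace Ω} {T : ℕ} {A : Finset (Fin J)}
    {X : Fin J → ℕ → Ω → ℝ} {g : Ω → ℝ} (hg : g ∈ gainsSet F T A X) :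
    -g ∈ gainsSet F T A X := by
  obtain ⟨H, hH, rfl⟩ := hg
  refine ⟨-H, fun j hj s hs hsT => (hH j hj s hs hsT).neg, ?_⟩
  funext ω
  simp [Finset.sum_neg_distrib]

lemma neg_mem_spanExch {N R : ℕ} {Ys : Fin R → Fin N → Ω → ℝ} {y : Fin N → Ω → ℝ}
    (hy : y ∈ spanExch Ys) : -y ∈ spanExch Ys := by
  obtain ⟨x, c, hx, hyx⟩ := hy
  refine ⟨-x, -c, by simp [hx], fun i => ?_⟩
  funext ω
  simp [hyx i, Finset.sum_neg_distrib, add_comm]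

variable {m0 : MeasurableSpace Ω}

lemma integrable_and_integral_eq_zero_of_mem_gainsSet {J : ℕ} {P Q : Measure Ω}
    {F : ℕ → MeasurableSpace Ω} (hF : Monotone F) (hFle : ∀ t, F t ≤ m0) {T : ℕ}
    {A : Finset (Fin J)} {X : Fin J → ℕ → Ω → ℝ}
    (hX : ∀ j ∈ A, ∀ t, t ≤ T → Measurable[F t] (X j t)) (hQ : Q ∈ martMeasures P F T A X)
    {g : Ω → ℝ} (hg : g ∈ gainsSet F T A X) {h : Ω → ℝ} (hh : Integrable h Q)
    (hbd : ∀ᵐ ω ∂Q, -h ω ≤ g ω) :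
    Integrable g Q ∧ ∫ ω, g ω ∂Q = 0 := by
  obtain ⟨hprob, -, -, hmart⟩ := hQ
  obtain ⟨H, hH, rfl⟩ := hg
  exact integrable_gain_and_integral_eq_zero hF hFle hH hX (fun j hj => (hmart j hj).1)
    (fun j hj t ht => (hmart j hj).2 t (t + 1) (by omega) ht) hh hbd

lemma sum_integral_eq_zero_of_mem_MeY {J N : ℕ} {P : Measure Ω}
    {F : Fin N → ℕ → MeasurableSpace Ω} {T : ℕ} {assets : Fin N → Finset (Fin J)}
    {X : Fin J → ℕ → Ω → ℝ} {Y : Set (Fin N → Ω → ℝ)} {Q : Fin N → Measure Ω}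
    (hQ : Q ∈ MeY P F T assets X Y) (hY : ∀ y ∈ Y, -y ∈ Y) {y : Fin N → Ω → ℝ}
    (hy : y ∈ Y) :
    ∑ i, ∫ ω, y i ω ∂(Q i) = 0 := by
  have hneg := hQ.2.2 (-y) (hY y hy)
  simp only [Pi.neg_apply, integral_neg, Finset.sum_neg_distrib, neg_nonpos] at hneg
  exact le_antisymm (hQ.2.2 y hy) hneg

lemma ae_eq_zero_of_sum_integral_eq_zero {ι : Type*} [Fintype ι] {Q : ι → Measure Ω}
    {s : ι → Ω → ℝ} (hs : ∀ i, 0 ≤ᵐ[Q i] s i) (hint : ∀ i, Integrable (s i) (Q i))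
    (hsum : ∑ i, ∫ ω, s i ω ∂(Q i) = 0) (i : ι) : s i =ᵐ[Q i] 0 :=
  (integral_eq_zero_iff_of_nonneg_ae (hs i) (hint i)).1 <|
    (Finset.sum_eq_zero_iff_of_nonneg fun i _ => integral_nonneg_of_ae (hs i)).1 hsum i
      (Finset.mem_univ i)

theorem ae_eq_of_superhedge_of_sum_eq_integral {J N : ℕ} {P : Measure Ω}
    {F : Fin N → ℕ → MeasurableSpace Ω} (hF : ∀ i, Monotone (F i))
    (hFle : ∀ i t, F i t ≤ m0)
    {T : ℕ} {X : Fin J → ℕ → Ω → ℝ} {assets : Fin N → Finset (Fin J)}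
    (hadapted : ∀ i, ∀ j ∈ assets i, ∀ t, t ≤ T → Measurable[F i t] (X j t))
    {Y : Set (Fin N → Ω → ℝ)} (hY : ∀ y ∈ Y, -y ∈ Y) {φ : Fin N → Ω → ℝ}
    {Q : Fin N → Measure Ω} (hQ : Q ∈ MeYphi P F T assets X Y φ) {f : Fin N → Ω → ℝ}
    (hfm : ∀ i, Measurable (f i)) (hdom : ∀ i, ∀ᵐ ω ∂P, |f i ω| ≤ φ i ω)
    {m : Fin N → ℝ} {k y : Fin N → Ω → ℝ} (hk : ∀ i, k i ∈ gainsSet (F i) T (assets i) X)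
    (hy : y ∈ Y) (hhedge : ∀ i, ∀ᵐ ω ∂P, f i ω ≤ m i + k i ω + y i ω)
    (hsum : ∑ i, m i = ∑ i, ∫ ω, f i ω ∂(Q i)) :
    ∀ i, f i =ᵐ[P] fun ω => m i + k i ω + y i ω := by
  obtain ⟨hmart, hyint, -⟩ := hQ.1
  have hprob (i : Fin N) : IsProbabilityMeasure (Q i) := (hmart i).1
  have hQP (i : Fin N) : ae (Q i) ≤ ae P := (hmart i).2.1.ae_le
  have hfint (i : Fin N) : Integrable (f i) (Q i) :=
    (hQ.2 i).mono' (hfm i).aestronglyMeasurable (hQP i (hdom i))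
  have hkint (i : Fin N) : Integrable (k i) (Q i) ∧ ∫ ω, k i ω ∂(Q i) = 0 := by
    refine integrable_and_integral_eq_zero_of_mem_gainsSet (hF i) (hFle i) (hadapted i)
      (hmart i) (hk i) (h := fun ω => φ i ω + |m i| + |y i ω|)
      (((hQ.2 i).add (integrable_const _)).add (hyint y hy i).abs) ?_
    filter_upwards [hQP i (hdom i), hQP i (hhedge i)] with ω hdomω hhedgeω
    linarith [neg_abs_le (f i ω), le_abs_self (m i), le_abs_self (y i ω)]
  set s : Fin N → Ω → ℝ := fun i ω => m i + k i ω + y i ω - f i ω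
  have hs_nonneg (i : Fin N) : 0 ≤ᵐ[Q i] s i :=
    hQP i ((hhedge i).mono fun ω hω => sub_nonneg.2 hω)
  have hmk (i : Fin N) : Integrable (fun ω => m i + k i ω) (Q i) :=
    (integrable_const _).add (hkint i).1
  have hmky (i : Fin N) : Integrable (fun ω => m i + k i ω + y i ω) (Q i) :=
    (hmk i).add (hyint y hy i)
  have hs_int (i : Fin N) : Integrable (s i) (Q i) := (hmky i).sub (hfint i)
  have hs_integral (i : Fin N) :
      ∫ ω, s i ω ∂(Q i) = m i + ∫ ω, y i ω ∂(Q i) - ∫ ω, f i ω ∂(Q i) := by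
    rw [integral_sub (hmky i) (hfint i), integral_add (hmk i) (hyint y hy i),
      integral_add (integrable_const _) (hkint i).1, (hkint i).2]
    simp
  have hs_sum : ∑ i, ∫ ω, s i ω ∂(Q i) = 0 := by
    rw [Finset.sum_congr rfl fun i _ => hs_integral i, Finset.sum_sub_distrib,
      Finset.sum_add_distrib, sum_integral_eq_zero_of_mem_MeY hQ.1 hY hy, hsum]
    ring
  intro i
  filter_upwards [(hmart i).2.2.1 (ae_eq_zero_of_sum_integral_eq_zero hs_nonneg hs_int
    hs_sum i)] with ω hω
  simp only [s, Pi.zero_apply] at hω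
  linarith

end Replication

theorem replicable_of_attainment_general
    {Ω : Type*} [m0 : MeasurableSpace Ω]
    (P : Measure Ω)
    (T J N : ℕ)
    (F : Fin N → ℕ → MeasurableSpace Ω)
    (hFmono : ∀ i, Monotone (F i))
    (hFle : ∀ i t, F i t ≤ m0)
    (X : Fin J → ℕ → Ω → ℝ)
    (assets : Fin N → Finset (Fin J))
    (hadapted : ∀ i, ∀ j ∈ assets i, ∀ t, t ≤ T → Measurable[F i t] (X j t))
    (R : ℕ) (Ys : Fin R → Fin N → Ω → ℝ)
    (f φ : Fin N → Ω → ℝ)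
    (hfmeas : ∀ i, Measurable[F i T] (f i))
    (hdom_f : ∀ i, ∀ᵐ ω ∂P, |f i ω| ≤ φ i ω) :
    (rhoPlusAttained P (fun i => gainsSet (F i) T (assets i) X) (spanExch Ys) f →
      (∃ Q ∈ MeYphi P F T assets X (spanExch Ys) φ,
        rhoPlus P (fun i => gainsSet (F i) T (assets i) X) (spanExch Ys) f
          = ((∑ i, ∫ ω, f i ω ∂(Q i) : ℝ) : EReal)) →
      Replicable P (fun i => gainsSet (F i) T (assets i) X) (spanExch Ys) f) ∧
    (rhoMinusAttained P (fun i => gainsSet (F i) T (assets i) X) (spanExch Ys) f →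
      (∃ Q ∈ MeYphi P F T assets X (spanExch Ys) φ,
        rhoMinus P (fun i => gainsSet (F i) T (assets i) X) (spanExch Ys) f
          = ((∑ i, ∫ ω, f i ω ∂(Q i) : ℝ) : EReal)) →
      Replicable P (fun i => gainsSet (F i) T (assets i) X) (spanExch Ys) f) := by
  have hfm (i : Fin N) : Measurable (f i) := (hfmeas i).mono (hFle i T) le_rfl
  refine ⟨?_, ?_⟩
  · rintro ⟨m, k, y, hy, hk, hhedge, hρ⟩ ⟨Q, hQ, hρQ⟩
    exact ⟨m, k, y, hy, hk, ae_eq_of_superhedge_of_sum_eq_integral hFmono hFle hadapted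
      (fun _ => neg_mem_spanExch) hQ hfm hdom_f hk hy hhedge
      (EReal.coe_eq_coe_iff.1 (hρ.symm.trans hρQ))⟩
  · rintro ⟨m, k, y, hy, hk, hsubhedge, hρ⟩ ⟨Q, hQ, hρQ⟩
    have hsum : ∑ i, m i = ∑ i, ∫ ω, f i ω ∂(Q i) :=
      EReal.coe_eq_coe_iff.1 (hρ.symm.trans hρQ)
    -- a subhedge of `f` is a superhedge of `-f`
    have hrep := ae_eq_of_superhedge_of_sum_eq_integral (f := -f) (m := -m) (k := -k)
      hFmono hFle hadapted (fun _ => neg_mem_spanExch) hQ (fun i => (hfm i).neg)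
      (by simpa using hdom_f) (fun i => neg_mem_gainsSet (hk i)) hy
      (fun i => (hsubhedge i).mono fun ω hω => by simp only [Pi.neg_apply]; linarith)
      (by simp [integral_neg, hsum])
    refine ⟨m, k, -y, neg_mem_spanExch hy, hk, fun i => (hrep i).mono fun ω hω => ?_⟩
    simp only [Pi.neg_apply] at hω ⊢
    linarith

/-- primal and dual attainment imply replicability (Proposition prop:attainrepl). -/
theorem replicable_of_attainment
    {Ω : Type*} [m0 : MeasurableSpace Ω]
    (P : Measure Ω) [IsProbabilityMeasure P]
    (T J N : ℕ) (hT : 1 ≤ T) (hJ : 1 ≤ J) (hN : 1 ≤ N)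
    (F : Fin N → ℕ → MeasurableSpace Ω)
    (hFmono : ∀ i, Monotone (F i))
    (hFle : ∀ i t, F i t ≤ m0)
    (hFzero : ∀ i, ∀ A : Set Ω, MeasurableSet[F i 0] A → P A = 0 ∨ P A = 1)
    (X : Fin J → ℕ → Ω → ℝ)
    (assets : Fin N → Finset (Fin J))
    (hassets : ∀ i, (assets i).Nonempty)
    (hcover : ∀ j, ∃ i, j ∈ assets i)
    (hadapted : ∀ i, ∀ j ∈ assets i, ∀ t, t ≤ T → Measurable[F i t] (X j t))
    (R : ℕ) (Ys : Fin R → Fin N → Ω → ℝ)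
    (hYsmeas : ∀ r i, Measurable[F i T] (Ys r i))
    (hNCA : NCA P (fun i => gainsSet (F i) T (assets i) X) (spanExch Ys))
    (f φ : Fin N → Ω → ℝ)
    (hfmeas : ∀ i, Measurable[F i T] (f i))
    (hφmeas : ∀ i, Measurable[F i T] (φ i))
    (hdom_f : ∀ i, ∀ᵐ ω ∂P, |f i ω| ≤ φ i ω)
    (hdom_Y : ∀ r, ∀ i, ∀ᵐ ω ∂P, |Ys r i ω| ≤ φ i ω) :
    (rhoPlusAttained P (fun i => gainsSet (F i) T (assets i) X) (spanExch Ys) f →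
      (∃ Q ∈ MeYphi P F T assets X (spanExch Ys) φ,
        rhoPlus P (fun i => gainsSet (F i) T (assets i) X) (spanExch Ys) f
          = ((∑ i, ∫ ω, f i ω ∂(Q i) : ℝ) : EReal)) →
      Replicable P (fun i => gainsSet (F i) T (assets i) X) (spanExch Ys) f) ∧
    (rhoMinusAttained P (fun i => gainsSet (F i) T (assets i) X) (spanExch Ys) f →
      (∃ Q ∈ MeYphi P F T assets X (spanExch Ys) φ,
        rhoMinus P (fun i => gainsSet (F i) T (assets i) X) (spanExch Ys) f
          = ((∑ i, ∫ ω, f i ω ∂(Q i) : ℝ) : EReal)) →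
      Replicable P (fun i => gainsSet (F i) T (assets i) X) (spanExch Ys) f) :=
  replicable_of_attainment_general (m0 := m0) P T J N F hFmono hFle X assets hadapted R Ys f φ
    hfmeas hdom_f

end CollectiveArb
end
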